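/- arXiv:1712.07367 — 7 statements merged into one kernel-verified Lean document; each statement's English description precedes it below -/
import Mathlib

section
/- Let W be a graphon and (Aₙ) a sequence of measurable sets in Ω such that ∫_{Aₙ×Aₙ} W → 0. If the indicator functions 1_{Aₙ} converge weak* (in L^∞(Ω) as the dual of L¹(Ω)) to a function f, then the support of f is an independent set in W, i.e., W = 0 almost everywhere on supp(f) × supp(f). -/
open MeasureTheory ENNReal Filter
open scoped Classical

noncomputable section

variable {Ω : Type*} [MeasurableSpace Ω]

/-- A graphon: symmetric measurable function with values in `[0,1]`. -/
def IsGraphon (W : Ω → Ω → ℝ) : Prop :=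
  Measurable (Function.uncurry W) ∧ (∀ x y, W x y = W y x) ∧ ∀ x y, W x y ∈ Set.Icc (0 : ℝ) 1

/-- `A` is an independent set of the graphon `W`: `W = 0` a.e. on `A × A`. -/
def IsIndepSet (μ : Measure Ω) (W : Ω → Ω → ℝ) (A : Set Ω) : Prop :=
  MeasurableSet A ∧ ∀ᵐ p ∂(μ.prod μ), p.1 ∈ A → p.2 ∈ A → W p.1 p.2 = 0

/-- The independence number: supremum of measures of independent sets. -/
def indepNum (μ : Measure Ω) (W : Ω → Ω → ℝ) : ℝ≥0∞ :=
  ⨆ (A : Set Ω) (_ : IsIndepSet μ W A), μ A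

/-- Homomorphism density of a finite graph `H` on `Fin k` in `W`
(product over unordered edges, written with `i < j`). -/
def homDensity {k : ℕ} (μ : Measure Ω) (W : Ω → Ω → ℝ) (H : SimpleGraph (Fin k)) : ℝ :=
  ∫ x : Fin k → Ω,
    ∏ p ∈ Finset.univ.filter (fun p : Fin k × Fin k => p.1 < p.2 ∧ H.Adj p.1 p.2),
      W (x p.1) (x p.2) ∂(Measure.pi fun _ => μ)

/-- The cut norm of a kernel `U`. -/
def cutNorm (μ : Measure Ω) (U : Ω → Ω → ℝ) : ℝ :=
  ⨆ (S : {S : Set Ω // MeasurableSet S}) (T : {T : Set Ω // MeasurableSet T}),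
    |∫ p in S.1 ×ˢ T.1, U p.1 p.2 ∂(μ.prod μ)|

/-- The cut distance: infimum over measure-preserving isomorphisms of the cut norm. -/
def cutDist (μ : Measure Ω) (W₁ W₂ : Ω → Ω → ℝ) : ℝ :=
  ⨅ (e : {e : Ω ≃ᵐ Ω // MeasurePreserving e μ μ}),
    cutNorm μ (fun x y => W₁ x y - W₂ (e.1 x) (e.1 y))

/-- `W` is a graphon representation of the finite graph `G`. -/
def IsGraphonRep {V : Type*} [Fintype V] (μ : Measure Ω) (G : SimpleGraph V)
    (W : Ω → Ω → ℝ) : Prop :=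
  ∃ P : V → Set Ω, (∀ v, MeasurableSet (P v)) ∧ Pairwise (Function.onFun Disjoint P) ∧
    (∀ v, μ (P v) = 1 / (Fintype.card V : ℝ≥0∞)) ∧ (⋃ v, P v) = Set.univ ∧
    ∀ u v, ∀ᵐ p ∂(μ.prod μ), p.1 ∈ P u → p.2 ∈ P v →
      W p.1 p.2 = if G.Adj u v then 1 else 0

/-- The chromatic number of a graphon, as an extended natural number. -/
def graphonChrom (μ : Measure Ω) (W : Ω → Ω → ℝ) : ℕ∞ :=
  sInf ((↑) '' {k : ℕ | ∃ f : Ω → Fin k, Measurable f ∧ ∀ i, IsIndepSet μ W (f ⁻¹' {i})})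

/-- A fractional coloring of a graphon. -/
def IsFracColoring (μ : Measure Ω) (W : Ω → Ω → ℝ) (c : Set Ω → ℝ≥0∞) : Prop :=
  (∀ I, c I ≤ 1) ∧ (∀ I, ¬ IsIndepSet μ W I → c I = 0) ∧
    ∀ᵐ x ∂μ, 1 ≤ ∑' I : Set Ω, Set.indicator I (fun _ => c I) x

/-- The fractional chromatic number of a graphon. -/
def graphonFracChrom (μ : Measure Ω) (W : Ω → Ω → ℝ) : ℝ≥0∞ :=
  ⨅ (c : Set Ω → ℝ≥0∞) (_ : IsFracColoring μ W c), ∑' I : Set Ω, c I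

/-- A fractional clique of a graphon. -/
def IsFracClique (μ : Measure Ω) (W : Ω → Ω → ℝ) (f : Ω → ℝ≥0∞) : Prop :=
  Measurable f ∧ (∀ x, f x ≠ ∞) ∧ ∀ I, IsIndepSet μ W I → ∫⁻ x in I, f x ∂μ ≤ 1

/-- The fractional clique number of a graphon. -/
def graphonFracClique (μ : Measure Ω) (W : Ω → Ω → ℝ) : ℝ≥0∞ :=
  ⨆ (f : Ω → ℝ≥0∞) (_ : IsFracClique μ W f), ∫⁻ x, f x ∂μ

/-- The clique number of a graphon. -/
def graphonClique (μ : Measure Ω) (W : Ω → Ω → ℝ) : ℕ∞ :=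
  sSup ((↑) '' {r : ℕ | 0 < homDensity μ W (⊤ : SimpleGraph (Fin r))})

/-- Independent set of a finite simple graph. -/
def GraphIndep {V : Type*} (G : SimpleGraph V) (I : Set V) : Prop :=
  I.Pairwise fun u v => ¬ G.Adj u v

/-- Fractional chromatic number of a finite graph. -/
def fracChrom {V : Type*} [Fintype V] (G : SimpleGraph V) : ℝ≥0∞ :=
  ⨅ (c : Set V → ℝ≥0∞) (_ : (∀ I, c I ≤ 1) ∧ (∀ I, ¬ GraphIndep G I → c I = 0) ∧
      ∀ v, 1 ≤ ∑' I : Set V, Set.indicator I (fun _ => c I) v),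
    ∑' I : Set V, c I

/-- Fractional clique number of a finite graph. -/
def fracClique {V : Type*} [Fintype V] (G : SimpleGraph V) : ℝ≥0∞ :=
  ⨆ (f : V → ℝ≥0∞) (_ : ∀ I : Set V, GraphIndep G I → ∑' v : I, f v ≤ 1),
    ∑ v, f v

/-- The b-fold chromatic number of a graphon. -/
def bFoldChrom (μ : Measure Ω) (W : Ω → Ω → ℝ) (b : ℕ) : ℕ∞ :=
  sInf ((↑) '' {k : ℕ | ∃ p : Ω → Finset (Fin k),
    (∀ i, MeasurableSet {x | i ∈ p x}) ∧ (∀ x, (p x).card = b) ∧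
    ∀ᵐ q ∂(μ.prod μ), W q.1 q.2 = 0 ∨ p q.1 ∩ p q.2 = ∅})

/-- Membership in the weak* closure of the convex hull of indicators of
independent sets (the independent set polyton `IND(W)`). -/
def InIND (μ : Measure Ω) (W : Ω → Ω → ℝ) (f : Ω → ℝ) : Prop :=
  ∀ (ε : ℝ), 0 < ε → ∀ (m : ℕ) (g : Fin m → Ω → ℝ), (∀ i, Integrable (g i) μ) →
    ∃ (t : ℕ) (a : Fin t → ℝ) (I : Fin t → Set Ω),
      (∀ j, 0 ≤ a j) ∧ (∑ j, a j = 1) ∧ (∀ j, IsIndepSet μ W (I j)) ∧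
      ∀ i, |∫ x, ((∑ j, a j * Set.indicator (I j) 1 x) - f x) * g i x ∂μ| < ε

end

open MeasureTheory ENNReal Filter

/-!
Testing the weak* convergence `1_{Aₙ} ⇀ f` against indicators gives `∫_E f = lim μ(Aₙ ∩ E)`,
so `0 ≤ f ≤ 1` a.e. Testing it against `W x ·` shows that the kernel averages
`∫ 1_{Aₙ}(y) W(x, y) dy` converge pointwise, and boundedly, to `∫ f(y) W(x, y) dy`; dominated
convergence then upgrades this to `∫_{Aₙ × Aₙ} W → ∫∫ f(x) f(y) W(x, y)`. Hence this last
integral vanishes, and since its integrand is nonnegative, `f(x) f(y) W(x, y) = 0` a.e.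
-/

def WeakStarTendsto {Ω : Type*} [MeasurableSpace Ω] (μ : Measure Ω) (u : ℕ → Ω → ℝ)
    (f : Ω → ℝ) : Prop :=
  ∀ g : Ω → ℝ, Integrable g μ →
    Tendsto (fun n => ∫ x, u n x * g x ∂μ) atTop (nhds (∫ x, f x * g x ∂μ))

section

variable {Ω : Type*} [MeasurableSpace Ω] {μ : Measure Ω}

theorem ae_nonneg_of_forall_integrableOn_setIntegral_nonneg [IsFiniteMeasure μ] {g : Ω → ℝ}
    (hg : Measurable g)
    (h : ∀ s, MeasurableSet s → IntegrableOn g s μ → 0 ≤ ∫ x in s, g x ∂μ) : 0 ≤ᵐ[μ] g := by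
  have hcover : (⋃ n : ℕ, {x | ‖g x‖ ≤ n}) = Set.univ :=
    Set.eq_univ_of_forall fun x => Set.mem_iUnion.2 (exists_nat_ge ‖g x‖)
  rw [EventuallyLE, ← Measure.restrict_univ (μ := μ), ← hcover, ae_restrict_iUnion_iff]
  intro n
  have hmeas : MeasurableSet {x | ‖g x‖ ≤ n} := measurableSet_le hg.norm measurable_const
  have hbdd : IntegrableOn g {x | ‖g x‖ ≤ n} μ :=
    .of_bound (measure_lt_top _ _) hg.aestronglyMeasurable.restrict n
      ((ae_restrict_iff' hmeas).2 (ae_of_all _ fun _ hx => hx))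
  exact ae_nonneg_restrict_of_forall_setIntegral_nonneg_inter hbdd fun s hs _ =>
    h _ (hs.inter hmeas) (hbdd.mono_set Set.inter_subset_right)

theorem ae_mem_Icc_of_forall_setIntegral_mem_Icc [IsFiniteMeasure μ] {g : Ω → ℝ}
    (hg : Measurable g) (h : ∀ s, MeasurableSet s → ∫ x in s, g x ∂μ ∈ Set.Icc 0 (μ.real s)) :
    ∀ᵐ x ∂μ, g x ∈ Set.Icc 0 1 := by
  have hlow : 0 ≤ᵐ[μ] g :=
    ae_nonneg_of_forall_integrableOn_setIntegral_nonneg hg fun s hs _ => (h s hs).1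
  have hup : 0 ≤ᵐ[μ] fun x => 1 - g x := by
    refine ae_nonneg_of_forall_integrableOn_setIntegral_nonneg (measurable_const.sub hg)
      fun s hs hint => ?_
    have hone : IntegrableOn (fun _ => (1 : ℝ)) s μ := integrableOn_const (measure_ne_top μ s)
    have hgs : IntegrableOn g s μ :=
      (hone.sub hint).congr_fun (fun x _ => sub_sub_cancel 1 (g x)) hs
    rw [integral_sub hone hgs, setIntegral_const, smul_eq_mul, mul_one, sub_nonneg]
    exact (h s hs).2
  filter_upwards [hlow, hup] with x h0 h1
  exact ⟨h0, sub_nonneg.1 h1⟩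

namespace WeakStarTendsto

variable {A : ℕ → Set Ω} {f : Ω → ℝ}

theorem tendsto_measureReal_inter [IsFiniteMeasure μ] (hA : ∀ n, MeasurableSet (A n))
    (hweak : WeakStarTendsto μ (fun n => (A n).indicator 1) f) {E : Set Ω}
    (hE : MeasurableSet E) :
    Tendsto (fun n => μ.real (A n ∩ E)) atTop (nhds (∫ x in E, f x ∂μ)) := by
  have hpair : ∀ n, ∫ x, (A n).indicator 1 x * E.indicator 1 x ∂μ = μ.real (A n ∩ E) :=
    fun n => by rw [← integral_indicator_one ((hA n).inter hE), Set.inter_indicator_one]; rfl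
  have hlim : ∫ x, f x * E.indicator 1 x ∂μ = ∫ x in E, f x ∂μ := by
    rw [← integral_indicator hE]
    congr 1 with x
    by_cases hx : x ∈ E <;> simp [hx]
  rw [← hlim]
  exact (hweak (E.indicator 1) ((integrable_const (1 : ℝ)).indicator hE)).congr hpair

theorem ae_mem_Icc [IsFiniteMeasure μ] (hA : ∀ n, MeasurableSet (A n)) (hf : Measurable f)
    (hweak : WeakStarTendsto μ (fun n => (A n).indicator 1) f) :
    ∀ᵐ x ∂μ, f x ∈ Set.Icc 0 1 :=
  ae_mem_Icc_of_forall_setIntegral_mem_Icc hf fun _ hE =>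
    have h := hweak.tendsto_measureReal_inter hA hE
    ⟨ge_of_tendsto' h fun _ => measureReal_nonneg,
      le_of_tendsto' h fun _ => measureReal_mono Set.inter_subset_right⟩

theorem tendsto_integral_mul [IsFiniteMeasure μ] {u h : ℕ → Ω → ℝ} {H : Ω → ℝ} {B C : ℝ}
    (hweak : WeakStarTendsto μ u f) (hu : ∀ n, AEStronglyMeasurable (u n) μ)
    (hu_bdd : ∀ n, ∀ᵐ x ∂μ, ‖u n x‖ ≤ B) (hh : ∀ n, AEStronglyMeasurable (h n) μ)
    (hh_bdd : ∀ n, ∀ᵐ x ∂μ, ‖h n x‖ ≤ C)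
    (hlim : ∀ᵐ x ∂μ, Tendsto (fun n => h n x) atTop (nhds (H x))) :
    Tendsto (fun n => ∫ x, u n x * h n x ∂μ) atTop (nhds (∫ x, f x * H x ∂μ)) := by
  have hH_bdd : ∀ᵐ x ∂μ, ‖H x‖ ≤ C := by
    filter_upwards [hlim, ae_all_iff.2 hh_bdd] with x hx hbd
    exact le_of_tendsto' hx.norm hbd
  have hH : Integrable H μ := .of_bound (aestronglyMeasurable_of_tendsto_ae atTop hh hlim) C hH_bdd
  have hdiff : ∀ n, Integrable (fun x => h n x - H x) μ := fun n =>
    (Integrable.of_bound (hh n) C (hh_bdd n)).sub hH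
  have herr : Tendsto (fun n => ∫ x, u n x * (h n x - H x) ∂μ) atTop (nhds 0) := by
    have hbound : ∀ n, ∀ᵐ x ∂μ, ‖u n x * (h n x - H x)‖ ≤ B * (C + C) := fun n => by
      filter_upwards [hu_bdd n, hh_bdd n, hH_bdd] with x hux hhx hHx
      rw [norm_mul]
      exact mul_le_mul hux (norm_sub_le_of_le hhx hHx) (norm_nonneg _)
        ((norm_nonneg _).trans hux)
    have hpoint : ∀ᵐ x ∂μ, Tendsto (fun n => u n x * (h n x - H x)) atTop (nhds 0) := by
      filter_upwards [hlim, ae_all_iff.2 hu_bdd] with x hx hux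
      have hsub : Tendsto (fun n => h n x - H x) atTop (nhds 0) := by
        simpa using hx.sub_const (H x)
      refine squeeze_zero_norm (fun n => ?_) (by simpa using hsub.norm.const_mul B)
      rw [norm_mul]
      exact mul_le_mul_of_nonneg_right (hux n) (norm_nonneg _)
    simpa using tendsto_integral_of_dominated_convergence (fun _ => B * (C + C))
      (fun n => (hu n).mul (hdiff n).1) (integrable_const _) hbound hpoint
  have hsplit : ∀ n, ∫ x, u n x * h n x ∂μ
      = ∫ x, u n x * (h n x - H x) ∂μ + ∫ x, u n x * H x ∂μ := fun n => by
    rw [← integral_add ((hdiff n).bdd_mul (hu n) (hu_bdd n)) (hH.bdd_mul (hu n) (hu_bdd n))]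
    simp only [mul_sub, sub_add_cancel]
  simpa only [hsplit, zero_add] using herr.add (hweak H hH)

end WeakStarTendsto

end

theorem setIntegral_eq_integral_indicator_one_mul {α : Type*} [MeasurableSpace α]
    {μ : Measure α} {s : Set α} (hs : MeasurableSet s) (F : α → ℝ) :
    ∫ x in s, F x ∂μ = ∫ x, s.indicator 1 x * F x ∂μ := by
  rw [← integral_indicator hs]
  congr 1 with x
  by_cases hx : x ∈ s <;> simp [hx]

theorem setIntegral_prod_eq_integral_indicator_mul {α β : Type*} [MeasurableSpace α]
    [MeasurableSpace β] {μ : Measure α} {ν : Measure β} [SFinite μ] [SFinite ν] {W : α → β → ℝ}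
    {s : Set α} {t : Set β} (hs : MeasurableSet s) (ht : MeasurableSet t)
    (hW : IntegrableOn (fun p => W p.1 p.2) (s ×ˢ t) (μ.prod ν)) :
    ∫ p in s ×ˢ t, W p.1 p.2 ∂(μ.prod ν)
      = ∫ x, s.indicator 1 x * ∫ y, t.indicator 1 y * W x y ∂ν ∂μ := by
  rw [setIntegral_prod _ hW, setIntegral_eq_integral_indicator_one_mul hs]
  simp_rw [setIntegral_eq_integral_indicator_one_mul ht]

namespace IsGraphon

variable {Ω : Type*} [MeasurableSpace Ω] {μ : Measure Ω} {W : Ω → Ω → ℝ}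

theorem measurable (hW : IsGraphon W) : Measurable fun p : Ω × Ω => W p.1 p.2 := hW.1

theorem nonneg (hW : IsGraphon W) (x y : Ω) : 0 ≤ W x y := (hW.2.2 x y).1

theorem norm_le_one (hW : IsGraphon W) (x y : Ω) : ‖W x y‖ ≤ 1 := by
  rw [Real.norm_eq_abs, abs_le]
  exact ⟨by linarith [hW.nonneg x y], (hW.2.2 x y).2⟩

theorem integrable [IsFiniteMeasure μ] (hW : IsGraphon W) :
    Integrable (fun p : Ω × Ω => W p.1 p.2) (μ.prod μ) :=
  .of_bound hW.measurable.aestronglyMeasurable 1 (ae_of_all _ fun p => hW.norm_le_one p.1 p.2)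

theorem integrable_apply [IsFiniteMeasure μ] (hW : IsGraphon W) (x : Ω) :
    Integrable (W x) μ :=
  .of_bound (hW.measurable.comp measurable_prodMk_left).aestronglyMeasurable 1
    (ae_of_all _ (hW.norm_le_one x))

theorem stronglyMeasurable_integral_mul [SFinite μ] (hW : IsGraphon W) {g : Ω → ℝ}
    (hg : Measurable g) : StronglyMeasurable fun x => ∫ y, g y * W x y ∂μ :=
  ((hg.comp measurable_snd).mul hW.measurable).stronglyMeasurable.integral_prod_right'

theorem norm_integral_mul_le [IsFiniteMeasure μ] (hW : IsGraphon W) {g : Ω → ℝ} {C : ℝ}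
    (hg : ∀ᵐ y ∂μ, ‖g y‖ ≤ C) (x : Ω) : ‖∫ y, g y * W x y ∂μ‖ ≤ C * μ.real Set.univ := by
  refine norm_integral_le_of_norm_le_const ?_
  filter_upwards [hg] with y hy
  rw [norm_mul]
  exact (mul_le_of_le_one_right (norm_nonneg _) (hW.norm_le_one x y)).trans hy

theorem isIndepSet_support_of_integral_mul_eq_zero [SFinite μ] (hW : IsGraphon W)
    {f : Ω → ℝ} (hf : Measurable f) (hf_int : Integrable f μ) (hf_nonneg : 0 ≤ᵐ[μ] f)
    (h0 : ∫ x, f x * ∫ y, f y * W x y ∂μ ∂μ = 0) : IsIndepSet μ W (Function.support f) := by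
  set Φ : Ω × Ω → ℝ := fun p => f p.1 * (f p.2 * W p.1 p.2)
  have hΦ_int : Integrable Φ (μ.prod μ) :=
    ((hf_int.mul_prod hf_int).bdd_mul hW.measurable.aestronglyMeasurable
      (ae_of_all _ fun p => hW.norm_le_one p.1 p.2)).congr (ae_of_all _ fun p => by ring)
  have hΦ_nonneg : 0 ≤ᵐ[μ.prod μ] Φ := by
    filter_upwards [Measure.quasiMeasurePreserving_fst.ae hf_nonneg,
      Measure.quasiMeasurePreserving_snd.ae hf_nonneg] with p h1 h2
    exact mul_nonneg h1 (mul_nonneg h2 (hW.nonneg _ _))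
  have hΦ_zero : Φ =ᵐ[μ.prod μ] 0 := by
    refine (integral_eq_zero_iff_of_nonneg_ae hΦ_nonneg hΦ_int).1 ?_
    rw [integral_prod _ hΦ_int]
    simpa only [Φ, integral_const_mul] using h0
  refine ⟨measurableSet_support hf, ?_⟩
  filter_upwards [hΦ_zero] with p hp h1 h2
  simpa [Φ, Function.mem_support.1 h1, Function.mem_support.1 h2] using hp

end IsGraphon

theorem stmt_1_general {Ω : Type*} [MeasurableSpace Ω] (μ : Measure Ω) [IsProbabilityMeasure μ]
    {W : Ω → Ω → ℝ} (hW : IsGraphon W)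
    (A : ℕ → Set Ω) (hA : ∀ n, MeasurableSet (A n))
    (hint : Tendsto (fun n => ∫ p in (A n) ×ˢ (A n), W p.1 p.2 ∂(μ.prod μ)) atTop (nhds 0))
    (f : Ω → ℝ) (hf : Measurable f)
    (hweak : ∀ g : Ω → ℝ, Integrable g μ →
      Tendsto (fun n => ∫ x, Set.indicator (A n) 1 x * g x ∂μ) atTop
        (nhds (∫ x, f x * g x ∂μ))) :
    IsIndepSet μ W (Function.support f) := by
  have hf01 : ∀ᵐ x ∂μ, f x ∈ Set.Icc 0 1 := WeakStarTendsto.ae_mem_Icc hA hf hweak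
  have hf_int : Integrable f μ := .of_bound hf.aestronglyMeasurable 1 <| hf01.mono fun x hx => by
    rw [Real.norm_eq_abs, abs_le]
    exact ⟨by linarith [hx.1], hx.2⟩
  have hind : ∀ n, Measurable ((A n).indicator (1 : Ω → ℝ)) := fun n =>
    measurable_one.indicator (hA n)
  have hind_bdd : ∀ n, ∀ᵐ y ∂μ, ‖(A n).indicator (1 : Ω → ℝ) y‖ ≤ 1 := fun n =>
    ae_of_all _ fun y => by by_cases hy : y ∈ A n <;> simp [hy]
  have hlim := WeakStarTendsto.tendsto_integral_mul hweak
    (fun n => (hind n).aestronglyMeasurable) hind_bdd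
    (fun n => (hW.stronglyMeasurable_integral_mul (hind n)).aestronglyMeasurable)
    (fun n => ae_of_all _ (hW.norm_integral_mul_le (hind_bdd n)))
    (ae_of_all _ fun x => hweak (W x) (hW.integrable_apply x))
  have hdensity : ∀ n, ∫ p in A n ×ˢ A n, W p.1 p.2 ∂(μ.prod μ)
      = ∫ x, (A n).indicator 1 x * ∫ y, (A n).indicator 1 y * W x y ∂μ ∂μ := fun n =>
    setIntegral_prod_eq_integral_indicator_mul (hA n) (hA n) hW.integrable.integrableOn
  exact hW.isIndepSet_support_of_integral_mul_eq_zero hf hf_int (hf01.mono fun _ hx => hx.1)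
    (tendsto_nhds_unique (hlim.congr fun n => (hdensity n).symm) hint)

theorem stmt_1 {Ω : Type*} [MeasurableSpace Ω] (μ : Measure Ω) [IsProbabilityMeasure μ]
    [NullSingletonClass μ] {W : Ω → Ω → ℝ} (hW : IsGraphon W)
    (A : ℕ → Set Ω) (hA : ∀ n, MeasurableSet (A n))
    (hint : Tendsto (fun n => ∫ p in (A n) ×ˢ (A n), W p.1 p.2 ∂(μ.prod μ)) atTop (nhds 0))
    (f : Ω → ℝ) (hf : Measurable f)
    (hweak : ∀ g : Ω → ℝ, Integrable g μ →
      Tendsto (fun n => ∫ x, Set.indicator (A n) 1 x * g x ∂μ) atTop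
        (nhds (∫ x, f x * g x ∂μ))) :
    IsIndepSet μ W (Function.support f) :=
  stmt_1_general μ hW A hA hint f hf hweak
end

section
/- For every graphon W, the supremum of the measures of independent sets of W is attained; i.e., there exists an independent set I with ν(I) = α(W), where α(W) := sup{ν(A) : A independent in W}. -/
open MeasureTheory ENNReal Filter
open scoped Classical

open MeasureTheory ENNReal Filter
open Topology

/-!
Take independent sets `Aₙ` with `μ Aₙ → α(W)`. Their indicators are bounded in `L²`, so a
subsequence converges weakly to some `f` with `0 ≤ f ≤ 1` and `∫ f = α(W)`. Testing against the
sections `W x ·` turns weak convergence into pointwise convergence of `T_W 1_{Aₙ}`, where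
`(T_W g) x = ∫ W x y * g y dy`, so by dominated convergence one can pass to the limit in
`0 = ⟪1_{Aₙ}, T_W 1_{Aₙ}⟫` and get `⟪f, T_W f⟫ = 0`. As `W ≥ 0`, `W` then vanishes a.e. on
`{f > 0}²`, so `{f > 0}` is independent, of measure at least `∫ f = α(W)`.
-/
theorem exists_subseq_tendsto_inner {𝕜 E : Type*} [RCLike 𝕜] [NormedAddCommGroup E]
    [InnerProductSpace 𝕜 E] [CompleteSpace E] {x : ℕ → E} {C : ℝ} (hx : ∀ n, ‖x n‖ ≤ C) :
    ∃ y : E, ∃ φ : ℕ → ℕ, StrictMono φ ∧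
      ∀ z, Tendsto (fun n => inner 𝕜 (x (φ n)) z) atTop (𝓝 (inner 𝕜 y z)) := by
  -- Sequential Banach–Alaoglu in the separable closed span `K` of the sequence; a test vector `z`
  -- pairs with elements of `K` through its orthogonal projection onto `K`.
  let K := (Submodule.span 𝕜 (Set.range x)).topologicalClosure
  have hxK : ∀ n, x n ∈ K :=
    fun n => Submodule.le_topologicalClosure _ (Submodule.subset_span ⟨n, rfl⟩)
  have : CompleteSpace K := (Submodule.isClosed_topologicalClosure _).completeSpace_coe
  have : TopologicalSpace.SeparableSpace K := by
    have : TopologicalSpace.IsSeparable (K : Set E) := by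
      rw [Submodule.topologicalClosure_coe]
      exact (Set.countable_range x).isSeparable.span.closure
    exact this.separableSpace
  let ℓ : ℕ → WeakDual 𝕜 K := fun n => (innerSL 𝕜 (x n)).comp K.subtypeL
  have hℓ : ∀ n, ℓ n ∈ WeakDual.toStrongDual ⁻¹' Metric.closedBall 0 C := by
    intro n
    simp only [Set.mem_preimage, Metric.mem_closedBall, dist_zero_right]
    refine ContinuousLinearMap.opNorm_le_bound _ ((norm_nonneg _).trans (hx 0)) fun u =>
      (norm_inner_le_norm (𝕜 := 𝕜) (x n) (u : E)).trans
        (mul_le_mul_of_nonneg_right (hx n) (norm_nonneg _))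
  obtain ⟨ℓ₀, -, φ, hφ, hlim⟩ := WeakDual.isSeqCompact_closedBall 𝕜 K 0 C hℓ
  refine ⟨((InnerProductSpace.toDual 𝕜 K).symm (WeakDual.toStrongDual ℓ₀) : E), φ, hφ,
    fun z => ?_⟩
  have key : ∀ w ∈ K, inner 𝕜 w z = inner 𝕜 w (K.orthogonalProjectionOnto z : E) :=
    fun w hw => (K.inner_orthogonalProjectionOnto_eq_of_mem_left ⟨w, hw⟩ z).symm
  rw [key _ (Submodule.coe_mem _), ← Submodule.coe_inner, InnerProductSpace.toDual_symm_apply]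
  simp_rw [key _ (hxK _)]
  exact ((WeakDual.eval_continuous _).tendsto ℓ₀).comp hlim

section

variable {Ω : Type*} [MeasurableSpace Ω] {μ : Measure Ω} {W : Ω → Ω → ℝ}

theorem exists_measurable_mem_Icc_ae_eq {F : Ω → ℝ} {a b : ℝ} (hab : a ≤ b) (hF : AEMeasurable F μ)
    (hFab : ∀ᵐ x ∂μ, F x ∈ Set.Icc a b) :
    ∃ f : Ω → ℝ, Measurable f ∧ (∀ x, f x ∈ Set.Icc a b) ∧ f =ᵐ[μ] F := by
  refine ⟨fun x => Set.projIcc a b hab (hF.mk F x), ?_, fun x => Subtype.prop _, ?_⟩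
  · exact continuous_subtype_val.measurable.comp
      ((continuous_projIcc).measurable.comp hF.measurable_mk)
  · filter_upwards [hF.ae_eq_mk, hFab] with x hx hxab
    rw [← hx, Set.projIcc_of_mem hab hxab]

theorem exists_subseq_tendsto_setIntegral [IsFiniteMeasure μ] {A : ℕ → Set Ω}
    (hA : ∀ n, MeasurableSet (A n)) :
    ∃ f : Ω → ℝ, Measurable f ∧ (∀ x, f x ∈ Set.Icc 0 1) ∧ ∃ φ : ℕ → ℕ, StrictMono φ ∧
      ∀ g : Ω → ℝ, MemLp g 2 μ →
        Tendsto (fun n => ∫ x in A (φ n), g x ∂μ) atTop (𝓝 (∫ x, f x * g x ∂μ)) := by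
  let ind : ∀ {s : Set Ω}, MeasurableSet s → Lp ℝ 2 μ :=
    fun hs => indicatorConstLp 2 hs (measure_ne_top μ _) (1 : ℝ)
  have hbound : ∀ n, ‖ind (hA n)‖ ≤ μ.real Set.univ ^ (1 / (2 : ℝ≥0∞).toReal) := fun n =>
    norm_indicatorConstLp_le.trans <| by
      rw [norm_one, one_mul]
      exact Real.rpow_le_rpow measureReal_nonneg (measureReal_mono (Set.subset_univ _))
        (by positivity)
  obtain ⟨F, φ, hφ, hF⟩ := exists_subseq_tendsto_inner (𝕜 := ℝ) hbound
  have hF' : ∀ g : Lp ℝ 2 μ,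
      Tendsto (fun n => ∫ x in A (φ n), g x ∂μ) atTop (𝓝 (∫ x, F x * g x ∂μ)) := by
    intro g
    convert hF g using 1
    · simp only [ind, L2.inner_indicatorConstLp_one]
    · simp [L2.inner_def, mul_comm]
  have hFS : ∀ S (hS : MeasurableSet S), ∫ x in S, F x ∂μ ∈ Set.Icc 0 (μ.real S) := by
    intro S hS
    have h := hF (ind hS)
    rw [real_inner_comm, L2.inner_indicatorConstLp_one] at h
    refine isClosed_Icc.mem_of_tendsto h (Eventually.of_forall fun n => ?_)
    rw [L2.real_inner_indicatorConstLp_one_indicatorConstLp_one]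
    exact ⟨measureReal_nonneg, measureReal_mono Set.inter_subset_right⟩
  have hFint : Integrable F μ := (Lp.memLp F).integrable one_le_two
  have hF01 : ∀ᵐ x ∂μ, F x ∈ Set.Icc 0 1 := by
    have h0 : 0 ≤ᵐ[μ] F :=
      ae_nonneg_of_forall_setIntegral_nonneg hFint fun S hS _ => (hFS S hS).1
    have h1 : F ≤ᵐ[μ] fun _ => 1 :=
      ae_le_of_forall_setIntegral_le hFint (integrable_const 1) fun S hS _ => by
        simpa using (hFS S hS).2
    filter_upwards [h0, h1] with x hx0 hx1 using ⟨hx0, hx1⟩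
  obtain ⟨f, hfm, hf01, hfF⟩ := exists_measurable_mem_Icc_ae_eq zero_le_one
    (Lp.aestronglyMeasurable F).aemeasurable hF01
  refine ⟨f, hfm, hf01, φ, hφ, fun g hg => ?_⟩
  convert hF' (hg.toLp g) using 1
  · funext n
    exact setIntegral_congr_ae (hA _) ((hg.coeFn_toLp).mono fun x hx _ => hx.symm)
  · refine congrArg _ (integral_congr_ae ?_)
    filter_upwards [hfF, hg.coeFn_toLp] with x hx hgx
    rw [hx, hgx]

theorem measurable_integral_kernel [SFinite μ] (hW : Measurable (Function.uncurry W)) {g : Ω → ℝ}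
    (hg : Measurable g) (s : Set Ω) :
    Measurable fun x => ∫ y in s, W x y * g y ∂μ :=
  ((hW.mul (hg.comp measurable_snd)).stronglyMeasurable.integral_prod_right'
    (ν := μ.restrict s)).measurable

section FiniteMeasure

variable [IsFiniteMeasure μ]

theorem abs_integral_kernel_le (hW : ∀ x y, |W x y| ≤ 1) {g : Ω → ℝ} (hg : ∀ y, |g y| ≤ 1)
    (s : Set Ω) (x : Ω) :
    |∫ y in s, W x y * g y ∂μ| ≤ μ.real Set.univ := by
  rw [← Real.norm_eq_abs]
  refine (norm_setIntegral_le_of_norm_le_const (C := 1) (measure_lt_top μ s)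
    fun y _ => ?_).trans ?_
  · rw [norm_mul, Real.norm_eq_abs, Real.norm_eq_abs]
    exact mul_le_one₀ (hW x y) (abs_nonneg _) (hg y)
  · rw [one_mul]
    exact measureReal_mono (Set.subset_univ s)

theorem integral_mul_kernel_mul_eq_zero (hWm : Measurable (Function.uncurry W))
    (hW : ∀ x y, |W x y| ≤ 1) {A : ℕ → Set Ω}
    (hAW : ∀ n, ∫ x in A n, ∫ y in A n, W x y ∂μ ∂μ = 0) {f : Ω → ℝ} (hfm : Measurable f)
    (hf : ∀ x, |f x| ≤ 1)
    (hlim : ∀ g : Ω → ℝ, MemLp g 2 μ →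
      Tendsto (fun n => ∫ x in A n, g x ∂μ) atTop (𝓝 (∫ x, f x * g x ∂μ))) :
    ∫ x, f x * ∫ y, W x y * f y ∂μ ∂μ = 0 := by
  let T : Ω → ℝ := fun x => ∫ y, W x y * f y ∂μ
  let Tn : ℕ → Ω → ℝ := fun n x => ∫ y in A n, W x y * 1 ∂μ
  have hTm : Measurable T := by simpa using measurable_integral_kernel hWm hfm Set.univ
  have hTnm : ∀ n, Measurable (Tn n) := fun n => measurable_integral_kernel hWm measurable_const _
  have hTb : ∀ x, |T x| ≤ μ.real Set.univ := by
    simpa using abs_integral_kernel_le hW hf Set.univ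
  have hTnb : ∀ n x, |Tn n x| ≤ μ.real Set.univ :=
    fun n => abs_integral_kernel_le hW (fun _ => by simp) _
  have hTn_T : ∀ x, Tendsto (fun n => Tn n x) atTop (𝓝 (T x)) := by
    intro x
    have hWx : MemLp (W x) 2 μ :=
      MemLp.of_bound hWm.of_uncurry_left.aestronglyMeasurable 1 (Eventually.of_forall (hW x))
    simpa [Tn, T, mul_comm] using hlim (W x) hWx
  have hL1 : Tendsto (fun n => ∫ x, |Tn n x - T x| ∂μ) atTop (𝓝 0) := by
    simpa using tendsto_integral_filter_of_norm_le_const (μ := μ) (l := atTop)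
      (f := fun _ => 0)
      (Eventually.of_forall fun n => ((hTnm n).sub hTm).abs.aestronglyMeasurable)
      ⟨2 * μ.real Set.univ, Eventually.of_forall fun n => Eventually.of_forall fun x => by
        rw [Real.norm_eq_abs, abs_abs, two_mul]
        exact (abs_sub _ _).trans (add_le_add (hTnb n x) (hTb x))⟩
      (Eventually.of_forall fun x => by simpa using ((hTn_T x).sub_const (T x)).abs)
  have hTint : Integrable T μ := Integrable.of_bound hTm.aestronglyMeasurable _
    (Eventually.of_forall hTb)
  have hdiff : Tendsto (fun n => ∫ x in A n, Tn n x ∂μ - ∫ x in A n, T x ∂μ) atTop (𝓝 0) := by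
    refine squeeze_zero_norm (fun n => ?_) hL1
    have hTnint : Integrable (Tn n) μ := Integrable.of_bound (hTnm n).aestronglyMeasurable _
      (Eventually.of_forall (hTnb n))
    rw [← integral_sub hTnint.integrableOn hTint.integrableOn]
    exact (norm_integral_le_integral_norm _).trans <| setIntegral_le_integral
      (hTnint.sub hTint).norm (Eventually.of_forall fun _ => norm_nonneg _)
  have hT : Tendsto (fun n => ∫ x in A n, T x ∂μ) atTop (𝓝 (∫ x, f x * T x ∂μ)) :=
    hlim T (MemLp.of_bound hTm.aestronglyMeasurable _ (Eventually.of_forall hTb))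
  refine tendsto_nhds_unique (f := fun n => ∫ x in A n, Tn n x ∂μ) (l := atTop) ?_ ?_
  · simpa using (hdiff.add hT)
  · simp [Tn, hAW]

theorem integral_le_measureReal_setOf_pos {f : Ω → ℝ} (hfm : Measurable f)
    (hf : ∀ x, f x ∈ Set.Icc 0 1) :
    ∫ x, f x ∂μ ≤ μ.real {x | 0 < f x} := by
  have hpos : MeasurableSet {x | 0 < f x} := measurableSet_lt measurable_const hfm
  rw [← integral_indicator_one hpos]
  refine integral_mono (Integrable.of_bound hfm.aestronglyMeasurable 1 (Eventually.of_forall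
    fun x => by simpa [abs_of_nonneg (hf x).1] using (hf x).2))
    ((integrable_const 1).indicator hpos) fun x => ?_
  by_cases hx : 0 < f x
  · simpa [Set.indicator_of_mem (show x ∈ {x | 0 < f x} from hx)] using (hf x).2
  · simp [not_lt.mp hx]

theorem isIndepSet_setOf_pos (hWm : Measurable (Function.uncurry W))
    (hW : ∀ x y, W x y ∈ Set.Icc 0 1) {f : Ω → ℝ} (hfm : Measurable f)
    (hf : ∀ x, f x ∈ Set.Icc 0 1) (hquad : ∫ x, f x * ∫ y, W x y * f y ∂μ ∂μ = 0) :
    IsIndepSet μ W {x | 0 < f x} := by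
  let G : Ω × Ω → ℝ := fun p => f p.1 * W p.1 p.2 * f p.2
  have hG0 : 0 ≤ G := fun p => mul_nonneg (mul_nonneg (hf _).1 (hW _ _).1) (hf _).1
  have hGint : Integrable G (μ.prod μ) := by
    refine Integrable.of_bound (by fun_prop) 1 (Eventually.of_forall fun p => ?_)
    rw [Real.norm_eq_abs, abs_of_nonneg (hG0 p)]
    exact mul_le_one₀ (mul_le_one₀ (hf _).2 (hW _ _).1 (hW _ _).2) (hf _).1 (hf _).2
  have hGzero : ∫ p, G p ∂(μ.prod μ) = 0 := by
    rw [integral_prod _ hGint, ← hquad]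
    simp only [G, mul_assoc, integral_const_mul]
  refine ⟨measurableSet_lt measurable_const hfm, ?_⟩
  filter_upwards [(integral_eq_zero_iff_of_nonneg hG0 hGint).mp hGzero] with p hp h1 h2
  simpa [G, (show 0 < f p.1 from h1).ne', (show 0 < f p.2 from h2).ne'] using hp

end FiniteMeasure

theorem setIntegral_setIntegral_eq_zero_of_isIndepSet [SFinite μ] {A : Set Ω}
    (hA : IsIndepSet μ W A) :
    ∫ x in A, ∫ y in A, W x y ∂μ ∂μ = 0 := by
  have hAA : ∀ᵐ p ∂(μ.prod μ).restrict (A ×ˢ A), W p.1 p.2 = 0 := by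
    rw [ae_restrict_iff' (hA.1.prod hA.1)]
    filter_upwards [hA.2] with p hp hpA using hp hpA.1 hpA.2
  rw [← setIntegral_prod (fun p : Ω × Ω => W p.1 p.2) ((integrable_zero _ _ _).congr
    (hAA.mono fun p hp => hp.symm)), integral_eq_zero_of_ae hAA]

theorem measure_le_indepNum {A : Set Ω} (hA : IsIndepSet μ W A) : μ A ≤ indepNum μ W :=
  le_iSup₂ (f := fun A (_ : IsIndepSet μ W A) => μ A) A hA

variable (μ W) in
theorem indepNum_le_measure_univ : indepNum μ W ≤ μ Set.univ :=
  iSup₂_le fun A _ => measure_mono (Set.subset_univ A)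

variable (μ W) in
theorem exists_seq_isIndepSet_tendsto_indepNum :
    ∃ A : ℕ → Set Ω, (∀ n, IsIndepSet μ W (A n)) ∧
      Tendsto (fun n => μ (A n)) atTop (𝓝 (indepNum μ W)) := by
  have hempty : IsIndepSet μ W ∅ := ⟨MeasurableSet.empty, Eventually.of_forall fun _ h => h.elim⟩
  have h := exists_seq_tendsto_sSup (S := μ '' {A | IsIndepSet μ W A}) ⟨_, ⟨∅, hempty, rfl⟩⟩
    (OrderTop.bddAbove _)
  rw [sSup_image] at h
  obtain ⟨u, -, hu, huS⟩ := h
  choose A hA hAu using huS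
  exact ⟨A, hA, by simpa [indepNum, hAu] using hu⟩

end

theorem stmt_3_general {Ω : Type*} [MeasurableSpace Ω] (μ : Measure Ω) [IsProbabilityMeasure μ]
    {W : Ω → Ω → ℝ} (hW : IsGraphon W) :
    ∃ I : Set Ω, IsIndepSet μ W I ∧ μ I = indepNum μ W := by
  obtain ⟨hWm, -, hW01⟩ := hW
  have abs_le_one : ∀ {a : ℝ}, a ∈ Set.Icc 0 1 → |a| ≤ 1 :=
    fun h => abs_le.2 ⟨by linarith [h.1], h.2⟩
  obtain ⟨A, hA, hAlim⟩ := exists_seq_isIndepSet_tendsto_indepNum μ W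
  obtain ⟨f, hfm, hf01, φ, hφ, hlim⟩ :=
    exists_subseq_tendsto_setIntegral (μ := μ) fun n => (hA n).1
  have hquad := integral_mul_kernel_mul_eq_zero (A := A ∘ φ) hWm
    (fun x y => abs_le_one (hW01 x y))
    (fun n => setIntegral_setIntegral_eq_zero_of_isIndepSet (hA _)) hfm
    (fun x => abs_le_one (hf01 x)) hlim
  have hI := isIndepSet_setOf_pos hWm hW01 hfm hf01 hquad
  have hα : indepNum μ W ≠ ⊤ := ne_top_of_le_ne_top (measure_ne_top μ _)
    (indepNum_le_measure_univ μ W)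
  have hint : ∫ x, f x ∂μ = (indepNum μ W).toReal := by
    refine tendsto_nhds_unique (by simpa using hlim 1 (memLp_const 1)) ?_
    simpa [Measure.real, Function.comp_def] using
      (ENNReal.tendsto_toReal hα).comp (hAlim.comp hφ.tendsto_atTop)
  refine ⟨_, hI, le_antisymm (measure_le_indepNum hI) ?_⟩
  rw [← ENNReal.ofReal_toReal hα, ← hint, ← ofReal_measureReal]
  exact ENNReal.ofReal_le_ofReal (integral_le_measureReal_setOf_pos hfm hf01)

theorem stmt_3 {Ω : Type*} [MeasurableSpace Ω] (μ : Measure Ω) [IsProbabilityMeasure μ]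
    [NullSingletonClass μ] {W : Ω → Ω → ℝ} (hW : IsGraphon W) :
    ∃ I : Set Ω, IsIndepSet μ W I ∧ μ I = indepNum μ W :=
  stmt_3_general μ hW
end

section
/- If (Wₙ) is a sequence of graphons converging to W in cut-distance, then α(W) ≥ limsupₙ α(Wₙ). (Upper semicontinuity of the independence number.) -/
open MeasureTheory ENNReal Filter
open scoped Classical

/-!
Let `b < α(Wₙ)` for infinitely many `n`. If `A` is an independent set of `Wₙ` with `μ A > b` and
`e` is a measure-preserving map with `‖Wₙ - W ∘ (e × e)‖_□ < ε`, then `∫_{A×A} Wₙ = 0` forces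
`∫_{C×C} W < ε` for `C = e(A)`, a set of the same measure. This yields sets `Cₖ` with
`μ Cₖ ≥ b` and `∫_{Cₖ×Cₖ} W → 0`. An ultrafilter limit `ν ≤ μ` of the measures `μ|Cₖ` has
`ν Ω ≥ b`, and `ν ⊗ ν` is the setwise limit of `μ|Cₖ ⊗ μ|Cₖ` (both agree on rectangles), so by
Markov's inequality `W = 0` holds `ν ⊗ ν`-a.e. Hence the support `{dν/dμ ≠ 0}` of `ν` is an
independent set of `W` of measure at least `b`.
-/

open MeasureTheory ENNReal Filter Set Topology

theorem ENNReal.tendsto_tsum_of_dominated_convergence {ι β : Type*} {L : Filter ι} [L.NeBot]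
    {f : ι → β → ℝ≥0∞} {g bound : β → ℝ≥0∞} (h_sum : ∑' k, bound k ≠ ∞)
    (hfg : ∀ k, Tendsto (f · k) L (𝓝 (g k))) (h_bound : ∀ i k, f i k ≤ bound k) :
    Tendsto (fun i => ∑' k, f i k) L (𝓝 (∑' k, g k)) := by
  have hbound_ne_top k : bound k ≠ ∞ := ne_top_of_le_ne_top h_sum (ENNReal.le_tsum k)
  have hf_ne_top i k : f i k ≠ ∞ := ne_top_of_le_ne_top (hbound_ne_top k) (h_bound i k)
  have hg_le k : g k ≤ bound k := le_of_tendsto' (hfg k) (h_bound · k)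
  have hg_ne_top k : g k ≠ ∞ := ne_top_of_le_ne_top (hbound_ne_top k) (hg_le k)
  rw [← ENNReal.tendsto_toReal_iff
    (fun i => ne_top_of_le_ne_top h_sum (ENNReal.tsum_le_tsum (h_bound i)))
    (ne_top_of_le_ne_top h_sum (ENNReal.tsum_le_tsum hg_le))]
  simp only [ENNReal.tsum_toReal_eq (hf_ne_top _), ENNReal.tsum_toReal_eq hg_ne_top]
  exact _root_.tendsto_tsum_of_dominated_convergence (ENNReal.summable_toReal h_sum)
    (fun k => (ENNReal.tendsto_toReal (hg_ne_top k)).comp (hfg k))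
    (Eventually.of_forall fun i k => by
      simpa using ENNReal.toReal_mono (hbound_ne_top k) (h_bound i k))

section SetwiseLimit

variable {α ι : Type*} [MeasurableSpace α]

theorem exists_measure_tendsto_of_le (𝒰 : Ultrafilter ι) {μ : Measure α} [IsFiniteMeasure μ]
    {ρ : ι → Measure α} (hρ : ∀ i, ρ i ≤ μ) :
    ∃ ν : Measure α, ν ≤ μ ∧ ∀ s, MeasurableSet s → Tendsto (fun i => ρ i s) 𝒰 (𝓝 (ν s)) := by
  set m : Set α → ℝ≥0∞ := fun s => (𝒰.map fun i => ρ i s).lim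
  -- `ℝ≥0∞` is compact, so every ultrafilter limit exists.
  have hm (s : Set α) : Tendsto (fun i => ρ i s) 𝒰 (𝓝 (m s)) := Ultrafilter.le_nhds_lim _
  have hm_empty : m ∅ = 0 := tendsto_nhds_unique (hm ∅) (by simp)
  have hm_iUnion (f : ℕ → Set α) (hf : ∀ n, MeasurableSet (f n))
      (hdisj : Pairwise (Function.onFun Disjoint f)) : m (⋃ n, f n) = ∑' n, m (f n) := by
    refine tendsto_nhds_unique (hm _) ?_
    simp only [measure_iUnion hdisj hf]
    exact ENNReal.tendsto_tsum_of_dominated_convergence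
      (by rw [← measure_iUnion hdisj hf]; exact measure_ne_top μ _)
      (fun n => hm (f n)) (fun i n => hρ i (f n))
  refine ⟨Measure.ofMeasurable (fun s _ => m s) hm_empty hm_iUnion, ?_, fun s hs => ?_⟩
  · refine Measure.le_iff.2 fun s hs => ?_
    rw [Measure.ofMeasurable_apply s hs]
    exact le_of_tendsto' (hm s) fun i => hρ i s
  · rw [Measure.ofMeasurable_apply s hs]
    exact hm s

theorem ae_eq_zero_of_tendsto_lintegral {L : Filter ι} [L.NeBot] {ρ : ι → Measure α}
    {ν : Measure α} (hρν : ∀ s, MeasurableSet s → Tendsto (fun i => ρ i s) L (𝓝 (ν s)))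
    {g : α → ℝ≥0∞} (hg : Measurable g) (hlim : Tendsto (fun i => ∫⁻ x, g x ∂ρ i) L (𝓝 0)) :
    g =ᵐ[ν] 0 := by
  have hlevel (n : ℕ) : ν {x | ((n : ℝ≥0∞) + 1)⁻¹ ≤ g x} = 0 := by
    have h0 : ((n : ℝ≥0∞) + 1)⁻¹ ≠ 0 := ENNReal.inv_ne_zero.2 (by simp)
    have htop : ((n : ℝ≥0∞) + 1)⁻¹ ≠ ∞ := ENNReal.inv_ne_top.2 (by simp)
    refine nonpos_iff_eq_zero.1 (le_of_tendsto_of_tendsto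
      (hρν _ (measurableSet_le measurable_const hg)) ?_
      (Eventually.of_forall fun i => meas_ge_le_lintegral_div hg.aemeasurable h0 htop))
    simpa using ENNReal.Tendsto.div_const hlim (Or.inr h0)
  refine ae_iff.2 (measure_mono_null (fun x hx => ?_) (measure_iUnion_null hlevel))
  obtain ⟨n, hn⟩ := ENNReal.exists_inv_nat_lt hx
  exact mem_iUnion.2 ⟨n, (ENNReal.inv_le_inv.2 le_self_add).trans hn.le⟩

theorem exists_ae_eq_zero_on_prod_of_tendsto_lintegral {μ : Measure α} [IsFiniteMeasure μ]
    {L : Filter ι} [L.NeBot] {B : ι → Set α} {b : ℝ≥0∞} (hb : ∀ i, b ≤ μ (B i))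
    {g : α × α → ℝ≥0∞} (hg : Measurable g)
    (hlim : Tendsto (fun i => ∫⁻ p in B i ×ˢ B i, g p ∂μ.prod μ) L (𝓝 0)) :
    ∃ A, MeasurableSet A ∧ b ≤ μ A ∧ ∀ᵐ p ∂μ.prod μ, p ∈ A ×ˢ A → g p = 0 := by
  set 𝒰 := Ultrafilter.of L
  obtain ⟨ν, hνμ, hν⟩ := exists_measure_tendsto_of_le 𝒰 fun i => μ.restrict_le_self (s := B i)
  obtain ⟨τ, -, hτ⟩ := exists_measure_tendsto_of_le 𝒰 (μ := μ.prod μ) fun i =>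
    Measure.prod_mono (μ.restrict_le_self (s := B i)) (μ.restrict_le_self (s := B i))
  have : IsFiniteMeasure ν := isFiniteMeasure_of_le μ hνμ
  have hντ : ν.prod ν = τ := Measure.prod_eq fun s t hs ht => by
    refine tendsto_nhds_unique (hτ _ (hs.prod ht)) ?_
    simpa only [Measure.prod_prod] using ENNReal.Tendsto.mul (hν s hs)
      (Or.inr (measure_ne_top ν t)) (hν t ht) (Or.inr (measure_ne_top ν s))
  have hg0 : g =ᵐ[ν.prod ν] 0 := by
    refine hντ ▸ ae_eq_zero_of_tendsto_lintegral hτ hg ?_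
    simpa only [Measure.prod_restrict] using hlim.mono_left (Ultrafilter.of_le L)
  set f := ν.rnDeriv μ
  set A := {x | f x ≠ 0}
  have hA : MeasurableSet A := (Measure.measurable_rnDeriv ν μ (measurableSet_singleton 0)).compl
  have hνμ_ac : ν ≪ μ := Measure.absolutelyContinuous_of_le hνμ
  have hνAc : ν Aᶜ = 0 :=
    measure_mono_null (fun x hx hpos => hx (LT.lt.ne' hpos)) (ae_iff.1 (Measure.rnDeriv_pos hνμ_ac))
  have hAν : μ.restrict A ≪ ν := by
    have h : μ.restrict A ≪ (μ.restrict A).withDensity f :=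
      withDensity_absolutelyContinuous' (Measure.measurable_rnDeriv ν μ).aemeasurable
        (ae_restrict_mem hA)
    rw [← restrict_withDensity hA, Measure.withDensity_rnDeriv_eq ν μ hνμ_ac] at h
    exact h.trans (Measure.absolutelyContinuous_of_le Measure.restrict_le_self)
  refine ⟨A, hA, ?_, ?_⟩
  · calc b ≤ ν univ := ge_of_tendsto (hν univ MeasurableSet.univ)
          (Eventually.of_forall fun i => by simpa using hb i)
      _ ≤ ν A + ν Aᶜ := measure_univ_le_add_compl A
      _ ≤ μ A := by rw [hνAc, add_zero]; exact Measure.le_iff'.1 hνμ A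
  · have hAAν : (μ.prod μ).restrict (A ×ˢ A) ≪ ν.prod ν := by
      rw [← Measure.prod_restrict]; exact hAν.prod hAν
    exact (ae_restrict_iff' (hA.prod hA)).1 (hAAν hg0)

end SetwiseLimit

section Graphon

variable {Ω : Type*} [MeasurableSpace Ω]

theorem IsGraphon.comp {W : Ω → Ω → ℝ} (hW : IsGraphon W) {e : Ω → Ω} (he : Measurable e) :
    IsGraphon fun x y => W (e x) (e y) :=
  ⟨hW.1.comp (he.prodMap he), fun x y => hW.2.1 (e x) (e y), fun x y => hW.2.2 (e x) (e y)⟩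

theorem IsGraphon.integrable_s4 {W : Ω → Ω → ℝ} (hW : IsGraphon W) (π : Measure (Ω × Ω))
    [IsFiniteMeasure π] : Integrable (fun p : Ω × Ω => W p.1 p.2) π :=
  .of_bound hW.1.aestronglyMeasurable 1 (ae_of_all _ fun p => by
    rw [Real.norm_eq_abs, abs_le]
    exact ⟨by linarith [(hW.2.2 p.1 p.2).1], (hW.2.2 p.1 p.2).2⟩)

theorem IsIndepSet.setIntegral_prod_eq_zero {μ : Measure Ω} {W : Ω → Ω → ℝ} {A : Set Ω}
    (hA : IsIndepSet μ W A) : ∫ p in A ×ˢ A, W p.1 p.2 ∂μ.prod μ = 0 :=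
  setIntegral_eq_zero_of_ae_eq_zero (hA.2.mono fun _ h hp => h hp.1 hp.2)

theorem le_indepNum {μ : Measure Ω} {W : Ω → Ω → ℝ} {A : Set Ω} (hA : IsIndepSet μ W A) :
    μ A ≤ indepNum μ W :=
  le_iSup₂ (f := fun A (_ : IsIndepSet μ W A) => μ A) A hA

theorem exists_isIndepSet_lt_of_lt_indepNum {μ : Measure Ω} {W : Ω → Ω → ℝ} {b : ℝ≥0∞}
    (hb : b < indepNum μ W) : ∃ A, IsIndepSet μ W A ∧ b < μ A := by
  simpa only [indepNum, lt_iSup_iff, exists_prop] using hb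

theorem IsGraphon.isIndepSet_of_ae_ofReal_eq_zero {μ : Measure Ω} {W : Ω → Ω → ℝ}
    (hW : IsGraphon W) {A : Set Ω} (hA : MeasurableSet A)
    (h : ∀ᵐ p ∂μ.prod μ, p ∈ A ×ˢ A → ENNReal.ofReal (W p.1 p.2) = 0) : IsIndepSet μ W A :=
  ⟨hA, h.mono fun p hp h1 h2 =>
    le_antisymm (ENNReal.ofReal_eq_zero.1 (hp ⟨h1, h2⟩)) (hW.2.2 p.1 p.2).1⟩

theorem abs_setIntegral_prod_le_cutNorm {μ : Measure Ω} {U : Ω → Ω → ℝ}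
    (hU : Integrable (fun p : Ω × Ω => U p.1 p.2) (μ.prod μ)) {S T : Set Ω}
    (hS : MeasurableSet S) (hT : MeasurableSet T) :
    |∫ p in S ×ˢ T, U p.1 p.2 ∂μ.prod μ| ≤ cutNorm μ U := by
  have hbound (S T : Set Ω) :
      |∫ p in S ×ˢ T, U p.1 p.2 ∂μ.prod μ| ≤ ∫ p, |U p.1 p.2| ∂μ.prod μ :=
    abs_integral_le_integral_abs.trans <| integral_mono_measure Measure.restrict_le_self
      (ae_of_all _ fun _ => abs_nonneg _) hU.abs
  have : Nonempty {T : Set Ω // MeasurableSet T} := ⟨⟨∅, .empty⟩⟩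
  set M := ∫ p, |U p.1 p.2| ∂μ.prod μ
  refine le_ciSup_of_le ⟨M, ?_⟩ ⟨S, hS⟩ (le_ciSup_of_le ⟨M, ?_⟩ ⟨T, hT⟩ le_rfl)
  · rintro _ ⟨S', rfl⟩
    exact ciSup_le fun T' => hbound _ _
  · rintro _ ⟨T', rfl⟩
    exact hbound _ _

theorem setIntegral_prod_preimage_measurePreserving {μ : Measure Ω} [SFinite μ]
    {e : Ω ≃ᵐ Ω} (he : MeasurePreserving e μ μ) (W : Ω → Ω → ℝ) (S T : Set Ω) :
    ∫ p in (e ⁻¹' S) ×ˢ (e ⁻¹' T), W (e p.1) (e p.2) ∂μ.prod μ =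
      ∫ p in S ×ˢ T, W p.1 p.2 ∂μ.prod μ :=
  (he.prod he).setIntegral_preimage_emb (e.prodCongr e).measurableEmbedding
    (fun p => W p.1 p.2) (S ×ˢ T)

theorem exists_lintegral_prod_le_of_cutDist_lt {μ : Measure Ω} [IsFiniteMeasure μ]
    {V W : Ω → Ω → ℝ} (hV : IsGraphon V) (hW : IsGraphon W) {A : Set Ω}
    (hA : IsIndepSet μ V A) {ε : ℝ} (hε : cutDist μ V W < ε) :
    ∃ C, μ C = μ A ∧ ∫⁻ p in C ×ˢ C, ENNReal.ofReal (W p.1 p.2) ∂μ.prod μ ≤ ENNReal.ofReal ε := by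
  have : Nonempty {e : Ω ≃ᵐ Ω // MeasurePreserving e μ μ} :=
    ⟨⟨MeasurableEquiv.refl Ω, MeasurePreserving.id μ⟩⟩
  obtain ⟨⟨e, he⟩, hcut⟩ := exists_lt_of_ciInf_lt hε
  set C := e.symm ⁻¹' A
  have hWe := hW.comp e.measurable
  have hint : ∫ p in A ×ˢ A, W (e p.1) (e p.2) ∂μ.prod μ = ∫ p in C ×ˢ C, W p.1 p.2 ∂μ.prod μ := by
    rw [← setIntegral_prod_preimage_measurePreserving he]
    simp [C, Set.preimage_preimage]
  have hsmall : ∫ p in C ×ˢ C, W p.1 p.2 ∂μ.prod μ < ε := by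
    have h := abs_setIntegral_prod_le_cutNorm (U := fun x y => V x y - W (e x) (e y))
      ((hV.integrable_s4 (μ.prod μ)).sub (hWe.integrable_s4 _)) hA.1 hA.1
    rw [integral_sub (hV.integrable_s4 _).integrableOn (hWe.integrable_s4 _).integrableOn,
      hA.setIntegral_prod_eq_zero, zero_sub, abs_neg, hint] at h
    exact (le_abs_self _).trans_lt (h.trans_lt hcut)
  refine ⟨C, (he.symm e).measure_preimage_equiv A, ?_⟩
  rw [← ofReal_integral_eq_lintegral_ofReal (hW.integrable_s4 _).integrableOn
    (ae_of_all _ fun p => (hW.2.2 p.1 p.2).1)]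
  exact ENNReal.ofReal_le_ofReal hsmall.le

end Graphon

open MeasureTheory ENNReal Filter

theorem stmt_4_general {Ω : Type*} [MeasurableSpace Ω] (μ : Measure Ω) [IsProbabilityMeasure μ]
    {W : Ω → Ω → ℝ} (hW : IsGraphon W) (Wn : ℕ → Ω → Ω → ℝ)
    (hWn : ∀ n, IsGraphon (Wn n))
    (hconv : Tendsto (fun n => cutDist μ (Wn n) W) atTop (nhds 0)) :
    limsup (fun n => indepNum μ (Wn n)) atTop ≤ indepNum μ W := by
  refine le_of_forall_lt_imp_le_of_dense fun b hb => ?_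
  have hfreq : ∃ᶠ n in atTop, b < indepNum μ (Wn n) :=
    frequently_lt_of_lt_limsup (by isBoundedDefault) hb
  have hsets (m : ℕ) : ∃ C, b ≤ μ C ∧ ∫⁻ p in C ×ˢ C, ENNReal.ofReal (W p.1 p.2) ∂μ.prod μ ≤
      ENNReal.ofReal (1 / (m + 1)) := by
    obtain ⟨n, hbn, hn⟩ := (hfreq.and_eventually
      (hconv.eventually (gt_mem_nhds Nat.one_div_pos_of_nat))).exists
    obtain ⟨A, hA, hbA⟩ := exists_isIndepSet_lt_of_lt_indepNum hbn
    obtain ⟨C, hCA, hC⟩ := exists_lintegral_prod_le_of_cutDist_lt (hWn n) hW hA hn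
    exact ⟨C, hCA ▸ hbA.le, hC⟩
  choose C hbC hC using hsets
  have hlim : Tendsto (fun m => ∫⁻ p in C m ×ˢ C m, ENNReal.ofReal (W p.1 p.2) ∂μ.prod μ)
      atTop (𝓝 0) :=
    tendsto_of_tendsto_of_tendsto_of_le_of_le tendsto_const_nhds
      (by simpa using ENNReal.tendsto_ofReal tendsto_one_div_add_atTop_nhds_zero_nat)
      (fun _ => zero_le) hC
  obtain ⟨A, hA, hbA, hA0⟩ := exists_ae_eq_zero_on_prod_of_tendsto_lintegral hbC
    (ENNReal.measurable_ofReal.comp hW.1) hlim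
  exact hbA.trans (le_indepNum (hW.isIndepSet_of_ae_ofReal_eq_zero hA hA0))

theorem stmt_4 {Ω : Type*} [MeasurableSpace Ω] (μ : Measure Ω) [IsProbabilityMeasure μ]
    [NullSingletonClass μ] {W : Ω → Ω → ℝ} (hW : IsGraphon W) (Wn : ℕ → Ω → Ω → ℝ)
    (hWn : ∀ n, IsGraphon (Wn n))
    (hconv : Tendsto (fun n => cutDist μ (Wn n) W) atTop (nhds 0)) :
    limsup (fun n => indepNum μ (Wn n)) atTop ≤ indepNum μ W :=
  stmt_4_general μ hW Wn hWn hconv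
end

section
/- Let G be a finite graph and W a graphon representation of G. Then the graphon chromatic number χ(W) equals the chromatic number χ(G). -/
open MeasureTheory ENNReal Filter
open scoped Classical

open MeasureTheory ENNReal Filter

/-!
A graphon representation is the pullback of the adjacency relation of `G` along a map
`π : Ω → V` whose fibres have positive measure. A proper colouring `c` of `G` lifts to the
colouring `c ∘ π` of `W`. Conversely, given a measurable colouring `f` of `W`, colour each
vertex `v` by a colour class meeting `π ⁻¹' {v}` in positive measure: if adjacent `u`, `v`
received the same colour, the product of the two positive-measure pieces would be a non-null
set inside that colour class squared on which `W = 1`.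
-/

section

variable {Ω V α : Type*} [MeasurableSpace Ω] {μ : Measure Ω} {W : Ω → Ω → ℝ}
  {G : SimpleGraph V}

theorem IsGraphonRep.exists_vertexMap [Fintype V] (h : IsGraphonRep μ G W) :
    ∃ π : Ω → V, (∀ v, MeasurableSet (π ⁻¹' {v})) ∧ (∀ v, μ (π ⁻¹' {v}) ≠ 0) ∧
      ∀ᵐ p ∂(μ.prod μ), W p.1 p.2 = if G.Adj (π p.1) (π p.2) then 1 else 0 := by
  obtain ⟨P, hPm, hPdisj, hPμ, hPcov, hPW⟩ := h
  choose π hπ using fun x => Set.mem_iUnion.1 (hPcov ▸ Set.mem_univ x)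
  have hfiber : ∀ v, π ⁻¹' {v} = P v := by
    refine fun v => Set.ext fun x => ⟨fun hx => hx ▸ hπ x, fun hx => ?_⟩
    by_contra hne
    exact Set.disjoint_left.1 (hPdisj hne) (hπ x) hx
  refine ⟨π, fun v => hfiber v ▸ hPm v, fun v => ?_, ?_⟩
  · simp [hfiber, hPμ]
  · have hPW' : ∀ᵐ p ∂(μ.prod μ), ∀ u v, p.1 ∈ P u → p.2 ∈ P v →
        W p.1 p.2 = if G.Adj u v then 1 else 0 := by
      simpa only [ae_all_iff] using hPW
    filter_upwards [hPW'] with p hp using hp _ _ (hπ p.1) (hπ p.2)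

theorem nonempty_coloring_of_isIndepSet_fibers [SFinite μ] [Countable α] {π : Ω → V}
    (hπ : ∀ v, μ (π ⁻¹' {v}) ≠ 0)
    (hadj : ∀ᵐ p ∂(μ.prod μ), G.Adj (π p.1) (π p.2) → W p.1 p.2 ≠ 0)
    {f : Ω → α} (hf : ∀ i, IsIndepSet μ W (f ⁻¹' {i})) : Nonempty (G.Coloring α) := by
  have hcolor : ∀ v, ∃ i, μ (π ⁻¹' {v} ∩ f ⁻¹' {i}) ≠ 0 := by
    intro v
    by_contra! h
    refine hπ v (measure_mono_null (fun x hx => ?_) (measure_iUnion_null h))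
    exact Set.mem_iUnion.2 ⟨f x, hx, rfl⟩
  choose c hc using hcolor
  refine ⟨SimpleGraph.Coloring.mk c fun {u v} huv hcuv => ?_⟩
  have hnull : μ.prod μ ((π ⁻¹' {u} ∩ f ⁻¹' {c u}) ×ˢ (π ⁻¹' {v} ∩ f ⁻¹' {c v})) = 0 := by
    rw [measure_eq_zero_iff_ae_notMem]
    filter_upwards [hadj, (hf (c u)).2] with p hW hindep
    rintro ⟨⟨hu, hfu⟩, hv, hfv⟩
    simp only [Set.mem_preimage, Set.mem_singleton_iff] at hu hv hfu hfv
    exact hW (hu ▸ hv ▸ huv) (hindep hfu (hfv.trans hcuv.symm))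
  rw [Measure.prod_prod, mul_eq_zero] at hnull
  exact hnull.elim (hc u) (hc v)

theorem isIndepSet_fiber_comp_coloring [Finite V] {π : Ω → V}
    (hπ : ∀ v, MeasurableSet (π ⁻¹' {v}))
    (hnonadj : ∀ᵐ p ∂(μ.prod μ), ¬ G.Adj (π p.1) (π p.2) → W p.1 p.2 = 0)
    (c : G.Coloring α) (i : α) : IsIndepSet μ W ((c ∘ π) ⁻¹' {i}) := by
  refine ⟨?_, ?_⟩
  · rw [Set.preimage_comp, ← Set.biUnion_preimage_singleton]
    exact MeasurableSet.biUnion (Set.to_countable _) fun v _ => hπ v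
  · filter_upwards [hnonadj] with p hp h1 h2
    exact hp fun hadj => c.valid hadj (h1.trans h2.symm)

theorem graphonChrom_eq_chromaticNumber [SFinite μ] [Finite V] {π : Ω → V}
    (hπm : ∀ v, MeasurableSet (π ⁻¹' {v})) (hπ : ∀ v, μ (π ⁻¹' {v}) ≠ 0)
    (hW : ∀ᵐ p ∂(μ.prod μ), W p.1 p.2 = if G.Adj (π p.1) (π p.2) then 1 else 0) :
    graphonChrom μ W = G.chromaticNumber := by
  have hcolorings : {k : ℕ | ∃ f : Ω → Fin k, Measurable f ∧ ∀ i, IsIndepSet μ W (f ⁻¹' {i})}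
      = {k | G.Colorable k} := by
    ext k
    constructor
    · rintro ⟨f, -, hf⟩
      refine nonempty_coloring_of_isIndepSet_fibers hπ ?_ hf
      filter_upwards [hW] with p hp hadj
      simp [hp, hadj]
    · rintro ⟨c⟩
      have hindep := isIndepSet_fiber_comp_coloring hπm
        (by filter_upwards [hW] with p hp hnonadj using hp.trans (if_neg hnonadj)) c
      exact ⟨c ∘ π, measurable_to_countable' fun i => (hindep i).1, hindep⟩
  rw [graphonChrom, hcolorings, sInf_image]
  rfl

end

theorem stmt_5_general {Ω : Type*} [MeasurableSpace Ω] (μ : Measure Ω) [IsProbabilityMeasure μ]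
    {W : Ω → Ω → ℝ}
    {V : Type*} [Fintype V] (G : SimpleGraph V) (hrep : IsGraphonRep μ G W) :
    graphonChrom μ W = G.chromaticNumber := by
  obtain ⟨π, hπm, hπ, hW⟩ := hrep.exists_vertexMap
  exact graphonChrom_eq_chromaticNumber hπm hπ hW

theorem stmt_5 {Ω : Type*} [MeasurableSpace Ω] (μ : Measure Ω) [IsProbabilityMeasure μ]
    [NullSingletonClass μ] {W : Ω → Ω → ℝ} (hW : IsGraphon W)
    {V : Type*} [Fintype V] (G : SimpleGraph V) (hrep : IsGraphonRep μ G W) :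
    graphonChrom μ W = G.chromaticNumber :=
  stmt_5_general μ G hrep
end

section
/- Let G be a finite graph and W a graphon representation of G. Then the fractional chromatic number of G equals the graphon fractional chromatic number of W: χ_frac(G) = χ_frac(W). -/
open MeasureTheory ENNReal Filter
open scoped Classical

open MeasureTheory ENNReal Filter

/-!
A fractional coloring of `G` lifts to `W` by blowing each independent set `J` up to
`⋃ v ∈ J, P v`, where `P` is the partition of `Ω` representing `G`. Conversely an independent
set `A` of `W` projects to its shadow `{v | μ (A ∩ P v) ≠ 0}`, which is independent in `G`
since `W = 1` a.e. on `P u × P v` for adjacent `u, v`; integrating the covering inequality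
over `P v` gives `μ (P v) ≤ ∑' A, c A * μ (A ∩ P v)`, so the shadows still cover `v`.
In both directions, pushing the weights forward along the map and capping them at `1` keeps
the covering condition and does not increase the total weight.
-/

open Set

section Pushforward

variable {α β : Type*}

noncomputable def truncPushforward (f : α → β) (c : α → ℝ≥0∞) (b : β) : ℝ≥0∞ :=
  min (∑' a : f ⁻¹' {b}, c a) 1

lemma truncPushforward_le_one (f : α → β) (c : α → ℝ≥0∞) (b : β) :
    truncPushforward f c b ≤ 1 :=
  min_le_right _ _

lemma tsum_truncPushforward_le (f : α → β) (c : α → ℝ≥0∞) :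
    ∑' b, truncPushforward f c b ≤ ∑' a, c a :=
  (ENNReal.tsum_le_tsum fun _ => min_le_left _ _).trans (ENNReal.tsum_fiberwise c f).le

lemma truncPushforward_eq_zero {f : α → β} {c : α → ℝ≥0∞} {b : β}
    (h : ∀ a, f a = b → c a = 0) : truncPushforward f c b = 0 := by
  have hfiber : ∑' a : f ⁻¹' {b}, c a = 0 := ENNReal.tsum_eq_zero.2 fun a => h a.1 a.2
  rw [truncPushforward, hfiber, min_eq_left zero_le_one]

lemma ENNReal.one_le_tsum_min_one {ι : Type*} {a : ι → ℝ≥0∞} (h : 1 ≤ ∑' i, a i) :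
    1 ≤ ∑' i, min (a i) 1 := by
  by_cases hbig : ∃ i, 1 ≤ a i
  · obtain ⟨i, hi⟩ := hbig
    exact (min_eq_right hi).symm.le.trans (ENNReal.le_tsum i)
  · push Not at hbig
    simpa only [min_eq_left (hbig _).le] using h

lemma one_le_tsum_indicator_truncPushforward {f : α → Set β} {c : α → ℝ≥0∞} {x : β}
    (h : 1 ≤ ∑' a, (f a).indicator (fun _ => c a) x) :
    1 ≤ ∑' s : Set β, s.indicator (fun _ => truncPushforward f c s) x := by
  have hfiber : ∀ s, s.indicator (fun _ => truncPushforward f c s) x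
      = min (∑' a : f ⁻¹' {s}, (f a).indicator (fun _ => c a) x) 1 := by
    intro s
    have hfa : ∀ a : f ⁻¹' {s}, f a = s := fun a => a.2
    by_cases hx : x ∈ s <;> simp [truncPushforward, hfa, hx]
  simp only [hfiber]
  refine ENNReal.one_le_tsum_min_one ?_
  rwa [ENNReal.tsum_fiberwise (fun a => (f a).indicator (fun _ => c a) x) f]

end Pushforward

lemma fracChrom_le_tsum_of_cover {V α : Type*} [Fintype V] {G : SimpleGraph V}
    {f : α → Set V} {c : α → ℝ≥0∞} (hindep : ∀ a, c a ≠ 0 → GraphIndep G (f a))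
    (hcover : ∀ v, 1 ≤ ∑' a, (f a).indicator (fun _ => c a) v) :
    fracChrom G ≤ ∑' a, c a := by
  refine (iInf₂_le (truncPushforward f c) ⟨truncPushforward_le_one f c, ?_,
    fun v => one_le_tsum_indicator_truncPushforward (hcover v)⟩).trans
    (tsum_truncPushforward_le f c)
  exact fun J hJ => truncPushforward_eq_zero fun a ha => by_contra fun h => hJ (ha ▸ hindep a h)

section Graphon

variable {Ω : Type*} [MeasurableSpace Ω] {μ : Measure Ω} {W : Ω → Ω → ℝ}

lemma graphonFracChrom_le_tsum_of_cover {α : Type*} {f : α → Set Ω} {c : α → ℝ≥0∞}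
    (hindep : ∀ a, c a ≠ 0 → IsIndepSet μ W (f a))
    (hcover : ∀ᵐ x ∂μ, 1 ≤ ∑' a, (f a).indicator (fun _ => c a) x) :
    graphonFracChrom μ W ≤ ∑' a, c a := by
  refine (iInf₂_le (truncPushforward f c) ⟨truncPushforward_le_one f c, ?_,
    hcover.mono fun x hx => one_le_tsum_indicator_truncPushforward hx⟩).trans
    (tsum_truncPushforward_le f c)
  exact fun B hB => truncPushforward_eq_zero fun a ha => by_contra fun h => hB (ha ▸ hindep a h)

lemma measure_le_tsum_mul_measure_inter {ι : Type*} [Countable ι] {A : ι → Set Ω}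
    {c : ι → ℝ≥0∞} (hA : ∀ i, MeasurableSet (A i))
    (hcover : ∀ᵐ x ∂μ, 1 ≤ ∑' i, (A i).indicator (fun _ => c i) x) (B : Set Ω) :
    μ B ≤ ∑' i, c i * μ (A i ∩ B) :=
  calc μ B = ∫⁻ _ in B, 1 ∂μ := by rw [setLIntegral_const, one_mul]
    _ ≤ ∫⁻ x in B, ∑' i, (A i).indicator (fun _ => c i) x ∂μ :=
      lintegral_mono_ae (ae_restrict_of_ae hcover)
    _ = ∑' i, c i * μ (A i ∩ B) := by
      rw [lintegral_tsum fun i => (measurable_const.indicator (hA i)).aemeasurable]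
      simp only [lintegral_indicator (hA _), setLIntegral_const, Measure.restrict_apply (hA _)]

lemma one_le_tsum_of_measure_inter_ne_zero {ι : Type*} [Countable ι] {A : ι → Set Ω}
    {c : ι → ℝ≥0∞} (hA : ∀ i, MeasurableSet (A i))
    (hcover : ∀ᵐ x ∂μ, 1 ≤ ∑' i, (A i).indicator (fun _ => c i) x) {B : Set Ω}
    (hB₀ : μ B ≠ 0) (hB : μ B ≠ ∞) :
    1 ≤ ∑' i, if μ (A i ∩ B) ≠ 0 then c i else 0 := by
  refine (ENNReal.mul_le_mul_iff_left hB₀ hB).1 ?_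
  calc 1 * μ B = μ B := one_mul _
    _ ≤ ∑' i, c i * μ (A i ∩ B) := measure_le_tsum_mul_measure_inter hA hcover B
    _ ≤ ∑' i, (if μ (A i ∩ B) ≠ 0 then c i else 0) * μ B := by
      refine ENNReal.tsum_le_tsum fun i => ?_
      split_ifs with hi
      · exact mul_le_mul_right (measure_mono inter_subset_right) _
      · rw [not_not.1 hi, mul_zero, zero_mul]
    _ = _ := ENNReal.tsum_mul_right

variable {V : Type*} {G : SimpleGraph V} {P : V → Set Ω}

lemma isIndepSet_biUnion [Countable V] (hP : ∀ v, MeasurableSet (P v))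
    (hPW : ∀ u v, ∀ᵐ p ∂(μ.prod μ), p.1 ∈ P u → p.2 ∈ P v →
      W p.1 p.2 = if G.Adj u v then 1 else 0)
    {J : Set V} (hJ : GraphIndep G J) : IsIndepSet μ W (⋃ v ∈ J, P v) := by
  refine ⟨.biUnion J.to_countable fun v _ => hP v, ?_⟩
  filter_upwards [ae_all_iff.2 fun u => ae_all_iff.2 (hPW u)] with p hp h₁ h₂
  obtain ⟨u, hu, hpu⟩ := mem_iUnion₂.1 h₁
  obtain ⟨v, hv, hpv⟩ := mem_iUnion₂.1 h₂
  rw [hp u v hpu hpv, if_neg fun huv => hJ hu hv (G.ne_of_adj huv) huv]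

lemma graphIndep_setOf_measure_inter_ne_zero [SFinite μ]
    (hPW : ∀ u v, ∀ᵐ p ∂(μ.prod μ), p.1 ∈ P u → p.2 ∈ P v →
      W p.1 p.2 = if G.Adj u v then 1 else 0)
    {A : Set Ω} (hA : IsIndepSet μ W A) : GraphIndep G {v | μ (A ∩ P v) ≠ 0} := by
  intro u hu v hv _ huv
  have hnull : μ.prod μ ((A ∩ P u) ×ˢ (A ∩ P v)) = 0 := by
    rw [measure_eq_zero_iff_ae_notMem]
    filter_upwards [hA.2, hPW u v] with p hA hP ⟨⟨h₁, hu⟩, h₂, hv⟩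
    simpa [hA h₁ h₂, huv] using hP hu hv
  rw [Measure.prod_prod, mul_eq_zero] at hnull
  exact hnull.elim hu hv

variable [Fintype V]

lemma graphonFracChrom_le_fracChrom (hP : ∀ v, MeasurableSet (P v)) (hPU : ⋃ v, P v = univ)
    (hPW : ∀ u v, ∀ᵐ p ∂(μ.prod μ), p.1 ∈ P u → p.2 ∈ P v →
      W p.1 p.2 = if G.Adj u v then 1 else 0) :
    graphonFracChrom μ W ≤ fracChrom G := by
  refine le_iInf₂ fun c ⟨_, hc₀, hcover⟩ => graphonFracChrom_le_tsum_of_cover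
    (fun J hJ => isIndepSet_biUnion hP hPW (by_contra fun h => hJ (hc₀ J h))) (ae_of_all _ ?_)
  intro x
  obtain ⟨v, hv⟩ := mem_iUnion.1 (hPU.symm ▸ mem_univ x : x ∈ ⋃ v, P v)
  refine (hcover v).trans (ENNReal.tsum_le_tsum fun J => ?_)
  by_cases hvJ : v ∈ J
  · rw [indicator_of_mem hvJ, indicator_of_mem (mem_biUnion hvJ hv)]
  · simp [hvJ]

lemma fracChrom_le_graphonFracChrom [SFinite μ] (hPμ₀ : ∀ v, μ (P v) ≠ 0)
    (hPμ : ∀ v, μ (P v) ≠ ∞)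
    (hPW : ∀ u v, ∀ᵐ p ∂(μ.prod μ), p.1 ∈ P u → p.2 ∈ P v →
      W p.1 p.2 = if G.Adj u v then 1 else 0) :
    fracChrom G ≤ graphonFracChrom μ W := by
  refine le_iInf₂ fun c ⟨_, hc₀, hcover⟩ => ?_
  by_cases htop : ∑' A, c A = ∞
  · exact htop ▸ le_top
  -- only the countably many sets of positive weight matter, which makes `lintegral_tsum` apply
  have := (Summable.countable_support_ennreal htop).to_subtype
  have hindep : ∀ A : Function.support c, IsIndepSet μ W A :=
    fun A => by_contra fun h => A.2 (hc₀ A h)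
  have hcover' : ∀ᵐ x ∂μ,
      1 ≤ ∑' A : Function.support c, (A : Set Ω).indicator (fun _ => c A) x :=
    hcover.mono fun x hx => by
      rwa [tsum_subtype_eq_of_support_subset (f := fun A : Set Ω => A.indicator (fun _ => c A) x)
        (Function.support_subset_iff'.2 fun A hA => by simp [Function.notMem_support.1 hA])]
  rw [← tsum_subtype_support c]
  refine fracChrom_le_tsum_of_cover (f := fun A : Function.support c => {v | μ (A ∩ P v) ≠ 0})
    (fun A _ => graphIndep_setOf_measure_inter_ne_zero hPW (hindep A)) fun v => ?_
  simpa only [indicator_apply, mem_ofPred_eq] using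
    one_le_tsum_of_measure_inter_ne_zero (fun A => (hindep A).1) hcover' (hPμ₀ v) (hPμ v)

end Graphon

theorem stmt_9_general {Ω : Type*} [MeasurableSpace Ω] (μ : Measure Ω) {W : Ω → Ω → ℝ}
    {V : Type*} [Fintype V] (G : SimpleGraph V) (hrep : IsGraphonRep μ G W) :
    fracChrom G = graphonFracChrom μ W := by
  obtain ⟨P, hP, -, hPμ, hPU, hPW⟩ := hrep
  have hPμ₀ : ∀ v, μ (P v) ≠ 0 := by simp [hPμ]
  have hPμ_top : ∀ v, μ (P v) ≠ ∞ := fun v => by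
    simp [hPμ, (Fintype.card_pos_iff.2 ⟨v⟩).ne']
  have : SigmaFinite μ := Measure.sigmaFinite_of_countable (countable_range P)
    (forall_mem_range.2 fun v => (hPμ_top v).lt_top) (by rwa [sUnion_range])
  exact le_antisymm (fracChrom_le_graphonFracChrom hPμ₀ hPμ_top hPW)
    (graphonFracChrom_le_fracChrom hP hPU hPW)

theorem stmt_9 {Ω : Type*} [MeasurableSpace Ω] (μ : Measure Ω) [IsProbabilityMeasure μ]
    [NullSingletonClass μ] {W : Ω → Ω → ℝ} (hW : IsGraphon W)
    {V : Type*} [Fintype V] (G : SimpleGraph V) (hrep : IsGraphonRep μ G W) :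
    fracChrom G = graphonFracChrom μ W :=
  stmt_9_general μ G hrep
end

section
/- Let W be a graphon with finite fractional chromatic number χ_frac(W) < ∞. Then W has finite chromatic number χ(W) < ∞. -/
open MeasureTheory ENNReal Filter
open scoped Classical

open MeasureTheory ENNReal Filter

namespace IsIndepSet

variable {Ω : Type*} [MeasurableSpace Ω] {μ : Measure Ω} {W : Ω → Ω → ℝ} {A B : Set Ω}

lemma mono (hA : IsIndepSet μ W A) (hB : MeasurableSet B) (hBA : B ⊆ A) :
    IsIndepSet μ W B :=
  ⟨hB, hA.2.mono fun _ hp h₁ h₂ => hp (hBA h₁) (hBA h₂)⟩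

lemma of_measure_zero [SFinite μ] (hA : MeasurableSet A) (hA₀ : μ A = 0) :
    IsIndepSet μ W A := by
  have hfst : ∀ᵐ p ∂(μ.prod μ), p.1 ∉ A :=
    Measure.quasiMeasurePreserving_fst.ae (measure_eq_zero_iff_ae_notMem.1 hA₀)
  exact ⟨hA, hfst.mono fun _ hp h => absurd h hp⟩

lemma empty : IsIndepSet μ W ∅ :=
  ⟨MeasurableSet.empty, .of_forall fun _ h => h.elim⟩

end IsIndepSet

section Coloring

variable {Ω : Type*} [MeasurableSpace Ω] {μ : Measure Ω} {W : Ω → Ω → ℝ}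

/-- Colour `x` by the first `n < k` with `x ∈ J n`; the null set of uncovered points gets the
extra colour `k`. -/
lemma graphonChrom_le_succ_of_ae_cover [SFinite μ] {k : ℕ} {J : ℕ → Set Ω}
    (hJ : ∀ n, IsIndepSet μ W (J n)) (hcov : ∀ᵐ x ∂μ, ∃ n < k, x ∈ J n) :
    graphonChrom μ W ≤ k + 1 := by
  let p : Ω → ℕ → Prop := fun x n => x ∈ J n ∨ n = k
  have hp : ∀ x, ∃ n, p x n := fun _ => ⟨k, Or.inr rfl⟩
  have hpm : ∀ n, MeasurableSet {x | p x n} := fun n =>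
    (hJ n).1.union (MeasurableSet.const (n = k))
  let color : Ω → Fin (k + 1) := fun x =>
    ⟨Nat.find (hp x), Nat.lt_succ_of_le (Nat.find_min' (hp x) (Or.inr rfl))⟩
  have hpre : ∀ i, color ⁻¹' {i} = (fun x => Nat.find (hp x)) ⁻¹' {(i : ℕ)} := fun i => by
    ext x; simp [color, Fin.ext_iff]
  have hmeas : ∀ i, MeasurableSet (color ⁻¹' {i}) := fun i =>
    hpre i ▸ measurable_find hp hpm (measurableSet_singleton _)
  have hclass : ∀ i, IsIndepSet μ W (color ⁻¹' {i}) := by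
    intro i
    by_cases hi : (i : ℕ) = k
    · have huncov : MeasurableSet {x | ∀ n < k, x ∉ J n} := by
        simp only [Set.ofPred_forall]
        exact .iInter fun n => .iInter fun _ => (hJ n).1.compl
      refine (IsIndepSet.of_measure_zero huncov ?_).mono (hmeas i) fun x hx n hn hxn => ?_
      · rw [measure_eq_zero_iff_ae_notMem]
        filter_upwards [hcov] with x ⟨n, hn, hxn⟩ h using h n hn hxn
      · rw [hpre, Set.mem_preimage, Set.mem_singleton_iff, hi] at hx
        exact Nat.find_min (hp x) (by omega) (Or.inl hxn)
    · refine (hJ i).mono (hmeas i) fun x hx => ?_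
      rw [hpre, Set.mem_preimage, Set.mem_singleton_iff] at hx
      exact (hx ▸ Nat.find_spec (hp x)).resolve_right hi
  have hcolor : Measurable color := measurable_to_countable' hmeas
  exact_mod_cast sInf_le (Set.mem_image_of_mem ((↑) : ℕ → ℕ∞)
    (show ∃ f : Ω → Fin (k + 1), Measurable f ∧ ∀ i, IsIndepSet μ W (f ⁻¹' {i}) from
      ⟨color, hcolor, hclass⟩))

lemma graphonChrom_le_card_succ_of_ae_cover [SFinite μ] {s : Finset (Set Ω)}
    (hs : ∀ I ∈ s, IsIndepSet μ W I) (hcov : ∀ᵐ x ∂μ, ∃ I ∈ s, x ∈ I) :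
    graphonChrom μ W ≤ s.card + 1 := by
  rw [← Finset.length_toList]
  refine graphonChrom_le_succ_of_ae_cover (J := fun n => s.toList.getD n ∅) (fun n => ?_) ?_
  · rcases lt_or_ge n s.toList.length with hn | hn
    · simpa [List.getElem?_eq_getElem hn] using hs _ (Finset.mem_toList.1 (List.getElem_mem hn))
    · simpa [List.getElem?_eq_none hn] using IsIndepSet.empty
  · filter_upwards [hcov] with x ⟨I, hI, hxI⟩
    obtain ⟨n, hn, rfl⟩ := List.mem_iff_getElem.1 (Finset.mem_toList.2 hI)
    exact ⟨n, hn, by simpa [List.getElem?_eq_getElem hn] using hxI⟩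

end Coloring

/-- Outside a finite family of independent sets the weights sum to less than `1`, so a.e. point
must receive positive weight from a set in the family. -/
lemma IsFracColoring.exists_finset_ae_cover {Ω : Type*} [MeasurableSpace Ω] {μ : Measure Ω}
    {W : Ω → Ω → ℝ} {c : Set Ω → ℝ≥0∞} (hc : IsFracColoring μ W c) (hfin : ∑' I, c I ≠ ⊤) :
    ∃ s : Finset (Set Ω), (∀ I ∈ s, IsIndepSet μ W I) ∧ ∀ᵐ x ∂μ, ∃ I ∈ s, x ∈ I := by
  obtain ⟨s, hs⟩ : ∃ s : Finset (Set Ω), ∑' I : {I // I ∉ s}, c I < 1 :=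
    ((ENNReal.tendsto_tsum_compl_atTop_zero hfin).eventually (gt_mem_nhds one_pos)).exists
  refine ⟨s.filter (IsIndepSet μ W), fun I hI => (Finset.mem_filter.1 hI).2, ?_⟩
  filter_upwards [hc.2.2] with x hx
  have htail : ∑' I : {I // I ∉ s}, Set.indicator I (fun _ => c I) x < 1 :=
    (ENNReal.tsum_le_tsum fun I => Set.indicator_le_self _ _ x).trans_lt hs
  have hhead : ∑ I ∈ s, Set.indicator I (fun _ => c I) x ≠ 0 := fun h₀ => by
    rw [← ENNReal.sum_add_tsum_compl s, h₀, zero_add] at hx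
    exact (hx.trans_lt htail).false
  obtain ⟨I, hIs, hI⟩ := Finset.exists_ne_zero_of_sum_ne_zero hhead
  have hxI : x ∈ I := by_contra fun h => hI (Set.indicator_of_notMem h _)
  rw [Set.indicator_of_mem hxI] at hI
  exact ⟨I, Finset.mem_filter.2 ⟨hIs, by_contra fun h => hI (hc.2.1 I h)⟩, hxI⟩

theorem stmt_10_general {Ω : Type*} [MeasurableSpace Ω] (μ : Measure Ω) [IsProbabilityMeasure μ]
    {W : Ω → Ω → ℝ} (hfin : graphonFracChrom μ W < ⊤) :
    graphonChrom μ W < ⊤ := by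
  obtain ⟨c, hc, hsum⟩ : ∃ c, IsFracColoring μ W c ∧ ∑' I, c I < ⊤ := by
    simpa only [graphonFracChrom, iInf_lt_iff, exists_prop] using hfin
  obtain ⟨s, hs, hcov⟩ := hc.exists_finset_ae_cover hsum.ne
  exact (graphonChrom_le_card_succ_of_ae_cover hs hcov).trans_lt (by simp)

theorem stmt_10 {Ω : Type*} [MeasurableSpace Ω] (μ : Measure Ω) [IsProbabilityMeasure μ]
    [NullSingletonClass μ] {W : Ω → Ω → ℝ} (hW : IsGraphon W)
    (hfin : graphonFracChrom μ W < ⊤) :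
    graphonChrom μ W < ⊤ :=
  stmt_10_general μ hfin
end

section
/- Let G be a finite graph and W a graphon with t(G, W) > 0. Then ω_frac(G) ≤ ω_frac(W). -/
open MeasureTheory ENNReal Filter
open scoped Classical

open MeasureTheory ENNReal Filter

/-!
Given a fractional clique `f` of `G`, draw `x : Fin k → Ω` with density proportional to the
homomorphism integrand `F x = ∏_{ij ∈ E(G)} W (x i) (x j)` (possible since `t(G, W) > 0`) and
spread the weight `f v` along the law of `x v`. The resulting density on `Ω` has total mass
`∑ v, f v`. If `I` is an independent set of `W`, then for almost every `x` with `F x ≠ 0` the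
vertices sent into `I` form an independent set of `G`, so they carry `f`-weight at most `1`;
averaging, the density has mass at most `1` on `I`.
-/

section ProductMeasure

variable {ι Ω : Type*} [Fintype ι] [DecidableEq ι] [MeasurableSpace Ω]
  (μ : Measure Ω) [IsProbabilityMeasure μ]

theorem lintegral_lintegral_update_pi (v : ι) {h : (ι → Ω) → ℝ≥0∞} (hh : Measurable h) :
    ∫⁻ y, ∫⁻ x, h (Function.update x v y) ∂Measure.pi (fun _ => μ) ∂μ
      = ∫⁻ x, h x ∂Measure.pi (fun _ => μ) := by
  have hupd : Measurable fun p : (ι → Ω) × Ω => h (Function.update p.1 v p.2) :=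
    hh.comp measurable_update'
  rw [lintegral_lintegral_swap hupd.aemeasurable.prod_swap]
  refine lintegral_eq_of_lmarginal_eq (μ := fun _ => μ) {v} (hupd.lintegral_prod_right') hh ?_
  ext x
  simp [lmarginal_singleton]

theorem lintegral_comp_eval_pi (u : ι) {φ : Ω → ℝ≥0∞} (hφ : Measurable φ) :
    ∫⁻ x, φ (x u) ∂Measure.pi (fun _ => μ) = ∫⁻ a, φ a ∂μ := by
  rw [← lintegral_map hφ (measurable_pi_apply u), Measure.pi_map_eval]
  simp

theorem map_eval_pair_pi {u v : ι} (huv : u ≠ v) :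
    (Measure.pi fun _ => μ).map (fun x : ι → Ω => (x u, x v)) = μ.prod μ := by
  have hm : Measurable fun x : ι → Ω => (x u, x v) :=
    (measurable_pi_apply u).prodMk (measurable_pi_apply v)
  ext s hs
  have hφ : Measurable (s.indicator (1 : Ω × Ω → ℝ≥0∞)) := measurable_one.indicator hs
  rw [Measure.map_apply hm hs, ← lintegral_indicator_one (hm hs), ← lintegral_indicator_one hs]
  change ∫⁻ x : ι → Ω, s.indicator 1 (x u, x v) ∂_ = _
  rw [lintegral_prod_symm' _ hφ,
    ← lintegral_lintegral_update_pi μ v (h := fun x => s.indicator 1 (x u, x v)) (hφ.comp hm)]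
  refine lintegral_congr fun y => ?_
  simp only [Function.update_self, Function.update_of_ne huv]
  exact lintegral_comp_eval_pi μ u (hφ.comp measurable_prodMk_right)

end ProductMeasure

section LiftWeight

variable {ι Ω : Type*} [Fintype ι] [DecidableEq ι] [MeasurableSpace Ω]
  (μ : Measure Ω) [IsProbabilityMeasure μ]

variable {F : (ι → Ω) → ℝ≥0∞}

noncomputable def vertexMarginal (F : (ι → Ω) → ℝ≥0∞) (v : ι) (y : Ω) : ℝ≥0∞ :=
  ∫⁻ x, F (Function.update x v y) ∂Measure.pi fun _ => μ

theorem measurable_vertexMarginal (hF : Measurable F) (v : ι) :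
    Measurable (vertexMarginal μ F v) :=
  (hF.comp measurable_update').lintegral_prod_left'

theorem lintegral_mul_vertexMarginal (hF : Measurable F) (v : ι) {φ : Ω → ℝ≥0∞}
    (hφ : Measurable φ) :
    ∫⁻ y, φ y * vertexMarginal μ F v y ∂μ = ∫⁻ x, φ (x v) * F x ∂Measure.pi fun _ => μ := by
  rw [← lintegral_lintegral_update_pi μ v (h := fun x => φ (x v) * F x)
    ((hφ.comp (measurable_pi_apply v)).mul hF)]
  refine lintegral_congr fun y => ?_
  simp only [vertexMarginal, Function.update_self]
  exact (lintegral_const_mul _ (hF.comp measurable_update_left)).symm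

/-- The density of `∑ v, f v • law (x v)`, where the random `x : ι → Ω` has density proportional
to `F` with respect to the product measure. -/
noncomputable def liftWeight (F : (ι → Ω) → ℝ≥0∞) (f : ι → ℝ≥0∞) (y : Ω) : ℝ≥0∞ :=
  (∫⁻ x, F x ∂Measure.pi fun _ => μ)⁻¹ * ∑ v, f v * vertexMarginal μ F v y

variable (f : ι → ℝ≥0∞)

theorem measurable_liftWeight (hF : Measurable F) : Measurable (liftWeight μ F f) :=
  (Finset.measurable_sum _ fun v _ => (measurable_vertexMarginal μ hF v).const_mul _).const_mul _

theorem lintegral_mul_liftWeight (hF : Measurable F) {φ : Ω → ℝ≥0∞} (hφ : Measurable φ) :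
    ∫⁻ y, φ y * liftWeight μ F f y ∂μ
      = (∫⁻ x, F x ∂Measure.pi fun _ => μ)⁻¹ *
          ∫⁻ x, F x * ∑ v, f v * φ (x v) ∂Measure.pi fun _ => μ := by
  have hterm : ∀ v, Measurable fun y => φ y * vertexMarginal μ F v y :=
    fun v => hφ.mul (measurable_vertexMarginal μ hF v)
  have hterm' : ∀ v, Measurable fun x : ι → Ω => φ (x v) * F x :=
    fun v => (hφ.comp (measurable_pi_apply v)).mul hF
  have hleft : ∀ y, φ y * liftWeight μ F f y
      = ∑ v, (∫⁻ x, F x ∂Measure.pi fun _ => μ)⁻¹ * f v * (φ y * vertexMarginal μ F v y) :=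
    fun y => by
      rw [liftWeight, Finset.mul_sum, Finset.mul_sum]
      exact Finset.sum_congr rfl fun v _ => by ring
  have hright : ∀ x : ι → Ω, F x * ∑ v, f v * φ (x v) = ∑ v, f v * (φ (x v) * F x) :=
    fun x => by
      rw [Finset.mul_sum]
      exact Finset.sum_congr rfl fun v _ => by ring
  rw [lintegral_congr hleft, lintegral_congr hright,
    lintegral_finsetSum _ fun v _ => (hterm v).const_mul _,
    lintegral_finsetSum _ fun v _ => (hterm' v).const_mul _, Finset.mul_sum]
  refine Finset.sum_congr rfl fun v _ => ?_
  rw [lintegral_const_mul _ (hterm v), lintegral_const_mul _ (hterm' v),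
    lintegral_mul_vertexMarginal μ hF v hφ, mul_assoc]

theorem lintegral_liftWeight (hF : Measurable F) (h0 : ∫⁻ x, F x ∂Measure.pi (fun _ => μ) ≠ 0)
    (htop : ∫⁻ x, F x ∂Measure.pi (fun _ => μ) ≠ ∞) :
    ∫⁻ y, liftWeight μ F f y ∂μ = ∑ v, f v := by
  simpa [lintegral_mul_const _ hF, ENNReal.inv_mul_cancel_left h0 htop]
    using lintegral_mul_liftWeight μ f hF measurable_one

theorem setLIntegral_liftWeight_le_one (hF : Measurable F) {I : Set Ω} (hI : MeasurableSet I)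
    (hFI : ∀ᵐ x ∂Measure.pi (fun _ => μ), F x * ∑ v, (x ⁻¹' I).indicator f v ≤ F x) :
    ∫⁻ y in I, liftWeight μ F f y ∂μ ≤ 1 := by
  have hφ : Measurable (I.indicator (1 : Ω → ℝ≥0∞)) := measurable_one.indicator hI
  have hind : ∀ x : ι → Ω, ∀ v, f v * I.indicator 1 (x v) = (x ⁻¹' I).indicator f v := by
    intro x v
    by_cases hv : x v ∈ I <;> simp [hv]
  calc ∫⁻ y in I, liftWeight μ F f y ∂μ
      = ∫⁻ y, I.indicator 1 y * liftWeight μ F f y ∂μ := by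
        rw [← lintegral_indicator hI]
        exact lintegral_congr fun y => by by_cases hy : y ∈ I <;> simp [hy]
    _ = (∫⁻ x, F x ∂Measure.pi fun _ => μ)⁻¹ *
          ∫⁻ x, F x * ∑ v, (x ⁻¹' I).indicator f v ∂Measure.pi fun _ => μ := by
        simp only [lintegral_mul_liftWeight μ f hF hφ, hind]
    _ ≤ (∫⁻ x, F x ∂Measure.pi fun _ => μ)⁻¹ * ∫⁻ x, F x ∂Measure.pi fun _ => μ :=
        mul_le_mul_right (lintegral_mono_ae hFI) _
    _ ≤ 1 := ENNReal.inv_mul_le_one _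

theorem liftWeight_ne_top (hF : ∀ x, F x ≤ 1) (h0 : ∫⁻ x, F x ∂Measure.pi (fun _ => μ) ≠ 0)
    {f : ι → ℝ≥0∞} (hf : ∀ v, f v ≠ ∞) (y : Ω) : liftWeight μ F f y ≠ ∞ := by
  have hmarg : ∀ v, vertexMarginal μ F v y ≠ ∞ := fun v =>
    ne_top_of_le_ne_top (by simp) (lintegral_mono fun x => hF (Function.update x v y))
  exact ENNReal.mul_ne_top (ENNReal.inv_ne_top.2 h0)
    (ENNReal.sum_ne_top.2 fun v _ => ENNReal.mul_ne_top (hf v) (hmarg v))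

end LiftWeight

theorem sum_indicator_le_one_of_graphIndep {V : Type*} [Fintype V] {G : SimpleGraph V}
    {f : V → ℝ≥0∞} (hf : ∀ I, GraphIndep G I → ∑' v : I, f v ≤ 1) {S : Set V}
    (hS : GraphIndep G S) : ∑ v, S.indicator f v ≤ 1 := by
  have hS_sum := hf S hS
  rwa [tsum_subtype, tsum_fintype] at hS_sum

section HomDensity

variable {Ω : Type*} {k : ℕ}

noncomputable def edgePairs (G : SimpleGraph (Fin k)) : Finset (Fin k × Fin k) :=
  Finset.univ.filter fun p => p.1 < p.2 ∧ G.Adj p.1 p.2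

theorem mem_edgePairs {G : SimpleGraph (Fin k)} {p : Fin k × Fin k} :
    p ∈ edgePairs G ↔ p.1 < p.2 ∧ G.Adj p.1 p.2 := by
  simp [edgePairs]

noncomputable def homIntegrand (W : Ω → Ω → ℝ) (G : SimpleGraph (Fin k)) (x : Fin k → Ω) :
    ℝ≥0∞ :=
  ∏ p ∈ edgePairs G, ENNReal.ofReal (W (x p.1) (x p.2))

variable {W : Ω → Ω → ℝ} (G : SimpleGraph (Fin k))

theorem homIntegrand_le_one (hW : ∀ x y, W x y ≤ 1) (x : Fin k → Ω) : homIntegrand W G x ≤ 1 :=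
  Finset.prod_le_one' fun _ _ => ENNReal.ofReal_le_one.2 (hW _ _)

variable [MeasurableSpace Ω]

theorem measurable_apply_eval_pair (hW : Measurable (Function.uncurry W)) (i j : Fin k) :
    Measurable fun x : Fin k → Ω => W (x i) (x j) :=
  hW.comp (f := fun x : Fin k → Ω => (x i, x j))
    ((measurable_pi_apply i).prodMk (measurable_pi_apply j))

theorem measurable_homIntegrand (hW : Measurable (Function.uncurry W)) :
    Measurable (homIntegrand W G) :=
  Finset.measurable_prod _ fun p _ =>
    ENNReal.measurable_ofReal.comp (measurable_apply_eval_pair hW p.1 p.2)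

theorem homDensity_eq_toReal_lintegral (μ : Measure Ω) (hW : Measurable (Function.uncurry W))
    (hW0 : ∀ x y, 0 ≤ W x y) :
    homDensity μ W G = (∫⁻ x, homIntegrand W G x ∂Measure.pi fun _ => μ).toReal := by
  rw [homDensity, integral_eq_lintegral_of_nonneg_ae
    (Eventually.of_forall fun x => Finset.prod_nonneg fun p _ => hW0 _ _) ?_]
  · simp_rw [homIntegrand, edgePairs, ENNReal.ofReal_prod_of_nonneg fun p _ => hW0 _ _]
  · exact (Finset.measurable_prod _ fun p _ =>
      measurable_apply_eval_pair hW p.1 p.2).aestronglyMeasurable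

theorem ae_graphIndep_preimage_of_homIntegrand_ne_zero (μ : Measure Ω) [IsProbabilityMeasure μ]
    {I : Set Ω} (hI : IsIndepSet μ W I) :
    ∀ᵐ x ∂Measure.pi (fun _ => μ), homIntegrand W G x ≠ 0 → GraphIndep G (x ⁻¹' I) := by
  have hedge : ∀ p : Fin k × Fin k, p.1 ≠ p.2 → ∀ᵐ x ∂Measure.pi (fun _ => μ),
      x p.1 ∈ I → x p.2 ∈ I → W (x p.1) (x p.2) = 0 := fun p hp =>
    ae_of_ae_map ((measurable_pi_apply p.1).prodMk (measurable_pi_apply p.2)).aemeasurable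
      (by rw [map_eval_pair_pi μ hp]; exact hI.2)
  filter_upwards [(eventually_all_finset (edgePairs G)).2 fun p hp =>
    hedge p (mem_edgePairs.1 hp).1.ne]
    with x hx hF a ha b hb hab hadj
  have hpos := Finset.prod_ne_zero_iff.1 hF
  rcases hab.lt_or_gt with h | h
  · have hp : (a, b) ∈ edgePairs G := mem_edgePairs.2 ⟨h, hadj⟩
    exact hpos _ hp (by rw [hx _ hp ha hb, ENNReal.ofReal_zero])
  · have hp : (b, a) ∈ edgePairs G := mem_edgePairs.2 ⟨h, hadj.symm⟩
    exact hpos _ hp (by rw [hx _ hp hb ha, ENNReal.ofReal_zero])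

theorem isFracClique_liftWeight_homIntegrand (μ : Measure Ω) [IsProbabilityMeasure μ]
    (hW : IsGraphon W) {f : Fin k → ℝ≥0∞} (hf : ∀ I, GraphIndep G I → ∑' v : I, f v ≤ 1)
    (h0 : ∫⁻ x, homIntegrand W G x ∂Measure.pi (fun _ => μ) ≠ 0) :
    IsFracClique μ W (liftWeight μ (homIntegrand W G) f) := by
  have hF := measurable_homIntegrand G hW.1
  have hf_ne_top : ∀ v, f v ≠ ∞ := fun v =>
    ne_top_of_le_ne_top one_ne_top (by simpa using hf {v} (Set.pairwise_singleton _ _))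
  refine ⟨measurable_liftWeight μ f hF,
    liftWeight_ne_top μ (homIntegrand_le_one G fun x y => (hW.2.2 x y).2) h0 hf_ne_top,
    fun I hI => setLIntegral_liftWeight_le_one μ f hF hI.1 ?_⟩
  filter_upwards [ae_graphIndep_preimage_of_homIntegrand_ne_zero G μ hI] with x hx
  by_cases hx0 : homIntegrand W G x = 0
  · simp [hx0]
  · exact mul_le_of_le_one_right' (sum_indicator_le_one_of_graphIndep hf (hx hx0))

end HomDensity

theorem stmt_17_general {Ω : Type*} [MeasurableSpace Ω] (μ : Measure Ω) [IsProbabilityMeasure μ]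
    {W : Ω → Ω → ℝ} (hW : IsGraphon W)
    {k : ℕ} (G : SimpleGraph (Fin k)) (ht : 0 < homDensity μ W G) :
    fracClique G ≤ graphonFracClique μ W := by
  rw [homDensity_eq_toReal_lintegral G μ hW.1 fun x y => (hW.2.2 x y).1] at ht
  obtain ⟨hT0, hTtop⟩ := ENNReal.toReal_pos_iff.1 ht
  refine iSup₂_le fun f hf => ?_
  rw [← lintegral_liftWeight μ f (measurable_homIntegrand G hW.1) hT0.ne' hTtop.ne]
  exact le_iSup₂ (f := fun g (_ : IsFracClique μ W g) => ∫⁻ y, g y ∂μ) _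
    (isFracClique_liftWeight_homIntegrand G μ hW hf hT0.ne')

theorem stmt_17 {Ω : Type*} [MeasurableSpace Ω] (μ : Measure Ω) [IsProbabilityMeasure μ]
    [NullSingletonClass μ] {W : Ω → Ω → ℝ} (hW : IsGraphon W)
    {k : ℕ} (G : SimpleGraph (Fin k)) (ht : 0 < homDensity μ W G) :
    fracClique G ≤ graphonFracClique μ W :=
  stmt_17_general μ hW G ht
end
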